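/- arXiv:2310.18905 — 6 statements merged into one kernel-verified Lean document; each statement's English description precedes it below -/
import Mathlib

section
/- Suppose P[Y | 𝓗 ⊔ σ(A)] = exp(c·A)·m almost surely, where c is a bounded 𝓗-measurable random variable and m is an 𝓗-measurable integrable random variable. Then the blipped-down outcome U = Y·exp(−c·A) satisfies P[U | 𝓗 ⊔ σ(A)] = m almost surely and P[U | 𝓗] = m almost surely; in particular, the conditional mean of U given 𝓗 and A does not depend on A. -/
open MeasureTheory

/-- If `P[Y | 𝓗 ⊔ σ(A)] = exp(c·A)·m` a.s., with `c` bounded `𝓗`-measurable and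
`m` an `𝓗`-measurable integrable random variable, then `U = Y·exp(−c·A)` satisfies
`P[U | 𝓗 ⊔ σ(A)] = m` a.s. and `P[U | 𝓗] = m` a.s. -/
theorem blip_down_conditional_mean
    {Ω : Type*} {m𝓗 : MeasurableSpace Ω} {mΩ : MeasurableSpace Ω} {P : Measure Ω} [IsProbabilityMeasure P]
    (h𝓗 : m𝓗 ≤ mΩ)
    {A : Ω → ℝ} (hA : Measurable A)
    (hA01 : ∀ᵐ ω ∂P, A ω = 0 ∨ A ω = 1)
    {Y : Ω → ℝ} (hY : Measurable Y) {CY : ℝ} (hYb : ∀ᵐ ω ∂P, |Y ω| ≤ CY)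
    {c : Ω → ℝ} (hc : Measurable[m𝓗] c) {Cc : ℝ} (hcb : ∀ᵐ ω ∂P, |c ω| ≤ Cc)
    {m : Ω → ℝ} (hm : Measurable[m𝓗] m) (hmInt : Integrable m P)
    (hmodel : P[Y | m𝓗 ⊔ MeasurableSpace.comap A inferInstance] =ᵐ[P]
      fun ω => Real.exp (c ω * A ω) * m ω) :
    (P[(fun ω => Y ω * Real.exp (-(c ω * A ω))) |
        m𝓗 ⊔ MeasurableSpace.comap A inferInstance] =ᵐ[P] m)
    ∧ (P[(fun ω => Y ω * Real.exp (-(c ω * A ω))) | m𝓗] =ᵐ[P] m) := by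
  set 𝓖 := m𝓗 ⊔ MeasurableSpace.comap A inferInstance with h𝓖def
  have h𝓖 : 𝓖 ≤ mΩ := sup_le h𝓗 hA.comap_le
  have hcG : Measurable[𝓖] c := hc.mono le_sup_left le_rfl
  have hAG : Measurable[𝓖] A := Measurable.of_comap_le le_sup_right
  have hfG : StronglyMeasurable[𝓖] (fun ω => Real.exp (-(c ω * A ω))) :=
    ((hcG.mul hAG).neg.exp).stronglyMeasurable
  have hYint : Integrable Y P := by
    refine (integrable_const CY).mono' hY.aestronglyMeasurable ?_
    filter_upwards [hYb] with ω h using by simpa [Real.norm_eq_abs] using h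
  have hbound : ∀ᵐ ω ∂P, ‖Real.exp (-(c ω * A ω))‖ ≤ Real.exp Cc := by
    filter_upwards [hA01, hcb] with ω hA' hc'
    rw [Real.norm_eq_abs, abs_of_pos (Real.exp_pos _)]
    apply Real.exp_le_exp.2
    rcases hA' with h | h <;> simp [h]
    · exact (abs_nonneg (c ω)).trans hc'
    · exact (neg_le_abs _).trans hc'
  have hmul := condExp_stronglyMeasurable_mul_of_bound h𝓖 hfG hYint (Real.exp Cc) hbound
  have h1 : P[(fun ω => Y ω * Real.exp (-(c ω * A ω))) | 𝓖] =ᵐ[P] m := by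
    have heq : (fun ω => Y ω * Real.exp (-(c ω * A ω)))
        = (fun ω => Real.exp (-(c ω * A ω))) * Y := by
      funext ω; simp [mul_comm]
    rw [heq]
    refine hmul.trans ?_
    filter_upwards [hmodel] with ω hw
    simp only [Pi.mul_apply, hw]
    rw [← mul_assoc, ← Real.exp_add]
    simp
  refine ⟨h1, ?_⟩
  have h2 := (condExp_condExp_of_le (le_sup_left : m𝓗 ≤ 𝓖) h𝓖 (μ := P)
    (f := fun ω => Y ω * Real.exp (-(c ω * A ω)))).symm
  refine h2.trans ?_
  refine (condExp_congr_ae h1).trans ?_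
  exact Filter.EventuallyEq.of_eq (condExp_of_stronglyMeasurable h𝓗 hm.stronglyMeasurable hmInt)
end

section
/- For all bounded 𝓗-measurable random variables φ_0, φ_1, ..., φ_K, P[W·φ_A | 𝓗] = Σ_{k=0}^{K} p̃_k·φ_k almost surely, where φ_A denotes the random variable ω ↦ φ_{A(ω)}(ω); that is, the multi-category weight transforms the conditional distribution of the treatment A given 𝓗 from (p_0,...,p_K) into (p̃_0,...,p̃_K). -/
open MeasureTheory

/-- For a treatment `A` with values in `{0,...,K}`, conditional probabilities
`p_k = P[1{A=k}|𝓗] ≥ ε`, and nonnegative bounded `𝓗`-measurable `p̃_0,...,p̃_K`, the weight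
`W = ∏_{k=0}^{K} (p̃_k/p_k)^{1{A=k}}` satisfies, for all bounded `𝓗`-measurable `φ_0,...,φ_K`,
`P[W·φ_A | 𝓗] = Σ_{k=0}^{K} p̃_k·φ_k` a.s. -/
theorem multicategory_weight_changes_randomization_probability
    {Ω : Type*} {m𝓗 : MeasurableSpace Ω} {mΩ : MeasurableSpace Ω} {P : Measure Ω} [IsProbabilityMeasure P]
    (h𝓗 : m𝓗 ≤ mΩ)
    {K : ℕ} {A : Ω → ℕ} (hA : Measurable A)
    (hAK : ∀ᵐ ω ∂P, A ω ≤ K)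
    {ε : ℝ} (hε : 0 < ε)
    (hpk : ∀ k ≤ K, ∀ᵐ ω ∂P,
      ε ≤ (P[(fun ω => if A ω = k then (1 : ℝ) else 0) | m𝓗]) ω)
    {ptil : ℕ → Ω → ℝ} (hptilmeas : ∀ k ≤ K, Measurable[m𝓗] (ptil k))
    (hptilnonneg : ∀ k ≤ K, ∀ᵐ ω ∂P, 0 ≤ ptil k ω)
    (hptilbdd : ∀ k ≤ K, ∃ C : ℝ, ∀ᵐ ω ∂P, |ptil k ω| ≤ C)
    {W : Ω → ℝ}
    (hW : W = fun ω => ∏ k ∈ Finset.range (K + 1),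
      (ptil k ω / (P[(fun ω => if A ω = k then (1 : ℝ) else 0) | m𝓗]) ω)
        ^ (if A ω = k then (1 : ℕ) else 0)) :
    ∀ φ : ℕ → Ω → ℝ, (∀ k ≤ K, Measurable[m𝓗] (φ k)) →
      (∀ k ≤ K, ∃ C : ℝ, ∀ᵐ ω ∂P, |φ k ω| ≤ C) →
      P[(fun ω => W ω * φ (A ω) ω) | m𝓗] =ᵐ[P]
        fun ω => ∑ k ∈ Finset.range (K + 1), ptil k ω * φ k ω := by
  intro φ hφmeas hφbdd
  set p : ℕ → Ω → ℝ :=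
    fun k => P[(fun ω => if A ω = k then (1 : ℝ) else 0) | m𝓗] with hpdef
  -- indicator functions
  set ind : ℕ → Ω → ℝ := fun k ω => if A ω = k then (1 : ℝ) else 0 with hinddef
  have hindmeas : ∀ k, Measurable[mΩ] (ind k) := fun k =>
    Measurable.ite (hA (measurableSet_singleton k)) measurable_const measurable_const
  have hindint : ∀ k, Integrable (ind k) P := by
    intro k
    refine Integrable.mono' (integrable_const (1 : ℝ))
      ((hindmeas k).aestronglyMeasurable : AEStronglyMeasurable[mΩ] (ind k) P) ?_
    filter_upwards with ω
    by_cases h : A ω = k <;> simp [ind, h]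
  -- the 𝓗-measurable factor
  set g : ℕ → Ω → ℝ := fun k ω => ptil k ω / p k ω * φ k ω with hgdef
  have hgmeas : ∀ k ≤ K, StronglyMeasurable[m𝓗] (g k) := by
    intro k hk
    exact (((hptilmeas k hk).div stronglyMeasurable_condExp.measurable).mul
      (hφmeas k hk)).stronglyMeasurable
  -- a.e. bounds on g
  have hgbdd : ∀ k ≤ K, ∃ C : ℝ, ∀ᵐ ω ∂P, |g k ω| ≤ C := by
    intro k hk
    obtain ⟨Cp, hCp⟩ := hptilbdd k hk
    obtain ⟨Cφ, hCφ⟩ := hφbdd k hk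
    refine ⟨Cp / ε * Cφ, ?_⟩
    filter_upwards [hCp, hCφ, hpk k hk] with ω h1 h2 h3
    have hpω : 0 < p k ω := lt_of_lt_of_le hε h3
    have hdiv : |ptil k ω / p k ω| ≤ Cp / ε := by
      rw [abs_div, abs_of_pos hpω]
      exact div_le_div₀ (le_trans (abs_nonneg _) h1) h1 hε h3
    calc |g k ω| = |ptil k ω / p k ω| * |φ k ω| := abs_mul _ _
      _ ≤ Cp / ε * Cφ :=
        mul_le_mul hdiv h2 (abs_nonneg _) (le_trans (abs_nonneg _) hdiv)
  have hgint : ∀ k ≤ K, Integrable (fun ω => g k ω * ind k ω) P := by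
    intro k hk
    obtain ⟨C, hC⟩ := hgbdd k hk
    refine Integrable.bdd_mul (c := C) (hindint k)
      (((hgmeas k hk).mono h𝓗).aestronglyMeasurable) ?_
    filter_upwards [hC] with ω h using h
  -- Step 1: rewrite the integrand a.e.
  have hstep1 : (fun ω => W ω * φ (A ω) ω) =ᵐ[P]
      fun ω => ∑ k ∈ Finset.range (K + 1), g k ω * ind k ω := by
    filter_upwards [hAK] with ω hω
    have hmem : A ω ∈ Finset.range (K + 1) := Finset.mem_range.2 (Nat.lt_succ_of_le hω)
    have hprod : (∏ k ∈ Finset.range (K + 1),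
        (ptil k ω / p k ω) ^ (if A ω = k then (1 : ℕ) else 0))
        = ptil (A ω) ω / p (A ω) ω := by
      rw [Finset.prod_eq_single_of_mem (A ω) hmem]
      · simp
      · intro b _ hb
        simp [Ne.symm hb]
    have hsum : (∑ k ∈ Finset.range (K + 1), g k ω * ind k ω)
        = g (A ω) ω := by
      rw [Finset.sum_eq_single_of_mem (A ω) hmem]
      · simp [ind]
      · intro b _ hb
        simp [ind, Ne.symm hb]
    simp only [hW]
    show (∏ k ∈ Finset.range (K + 1),
        (ptil k ω / p k ω) ^ (if A ω = k then (1 : ℕ) else 0)) * φ (A ω) ω = _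
    rw [hprod, hsum]
  -- Step 2: conditional expectation computation
  refine (condExp_congr_ae hstep1).trans ?_
  have hsum_eq : (fun ω => ∑ k ∈ Finset.range (K + 1), g k ω * ind k ω)
      = ∑ k ∈ Finset.range (K + 1), (fun ω => g k ω * ind k ω) := by
    ext ω; simp
  rw [hsum_eq]
  refine (condExp_finsetSum (m := m𝓗) fun k hk =>
    hgint k (Nat.lt_succ_iff.mp (Finset.mem_range.mp hk))).trans ?_
  -- each term
  have hterm : ∀ k ∈ Finset.range (K + 1),
      P[(fun ω => g k ω * ind k ω) | m𝓗] =ᵐ[P] fun ω => ptil k ω * φ k ω := by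
    intro k hk
    have hk' : k ≤ K := Nat.lt_succ_iff.mp (Finset.mem_range.mp hk)
    have hmul : P[(fun ω => g k ω * ind k ω) | m𝓗] =ᵐ[P] g k * P[ind k | m𝓗] :=
      condExp_mul_of_stronglyMeasurable_left (hgmeas k hk') (hgint k hk') (hindint k)
    refine hmul.trans ?_
    filter_upwards [hpk k hk'] with ω h3
    have hpne : p k ω ≠ 0 := ne_of_gt (lt_of_lt_of_le hε h3)
    show g k ω * p k ω = ptil k ω * φ k ω
    have : g k ω = ptil k ω / p k ω * φ k ω := rfl
    rw [this]
    field_simp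
  calc ∑ k ∈ Finset.range (K + 1), P[(fun ω => g k ω * ind k ω) | m𝓗]
      =ᵐ[P] ∑ k ∈ Finset.range (K + 1), (fun ω => ptil k ω * φ k ω) := by
        exact eventuallyEq_sum hterm
    _ = fun ω => ∑ k ∈ Finset.range (K + 1), ptil k ω * φ k ω := by
        ext ω; simp
end

section
/- For every bounded 𝓗-measurable random variable h, E[S·W·(Y·exp(−c·A) − h)·(A − p̃)] = E[S·p̃·(1−p̃)·(exp(−c)·μ1 − μ0)] = 0. That is, under the marginal excursion-effect model, the weighted and centered estimating function for the marginal excursion effect has mean zero at the true parameter value, for any working model h of the conditional mean of the blipped-down outcome. -/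
open MeasureTheory


lemma bdd_integrable' {Ω : Type*} {mΩ : MeasurableSpace Ω} {P : Measure Ω} [IsFiniteMeasure P]
    {f : Ω → ℝ} (hf : AEStronglyMeasurable f P) {C : ℝ} (hb : ∀ᵐ ω ∂P, |f ω| ≤ C) :
    Integrable f P :=
  ⟨hf, HasFiniteIntegral.of_bounded (C := C) (by simpa [Real.norm_eq_abs] using hb)⟩

lemma aebdd_mul' {Ω : Type*} {mΩ : MeasurableSpace Ω} {P : Measure Ω}
    {f g : Ω → ℝ} (hf : ∃ C, ∀ᵐ ω ∂P, |f ω| ≤ C) (hg : ∃ C, ∀ᵐ ω ∂P, |g ω| ≤ C) :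
    ∃ C, ∀ᵐ ω ∂P, |f ω * g ω| ≤ C := by
  obtain ⟨C1, h1⟩ := hf
  obtain ⟨C2, h2⟩ := hg
  refine ⟨max C1 0 * max C2 0, ?_⟩
  filter_upwards [h1, h2] with ω h1 h2
  rw [abs_mul]
  exact mul_le_mul (h1.trans (le_max_left _ _)) (h2.trans (le_max_left _ _))
    (abs_nonneg _) (le_max_right _ _)

lemma aebdd_sub' {Ω : Type*} {mΩ : MeasurableSpace Ω} {P : Measure Ω}
    {f g : Ω → ℝ} (hf : ∃ C, ∀ᵐ ω ∂P, |f ω| ≤ C) (hg : ∃ C, ∀ᵐ ω ∂P, |g ω| ≤ C) :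
    ∃ C, ∀ᵐ ω ∂P, |f ω - g ω| ≤ C := by
  obtain ⟨C1, h1⟩ := hf
  obtain ⟨C2, h2⟩ := hg
  refine ⟨C1 + C2, ?_⟩
  filter_upwards [h1, h2] with ω h1 h2
  exact (abs_sub _ _).trans (add_le_add h1 h2)

lemma pull_out' {Ω : Type*} {mΩ : MeasurableSpace Ω} {P : Measure Ω} [IsProbabilityMeasure P]
    {m : MeasurableSpace Ω} (hm : m ≤ mΩ) {g X : Ω → ℝ}
    (hg : StronglyMeasurable[m] g) (hgb : ∃ C, ∀ᵐ ω ∂P, |g ω| ≤ C)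
    (hX : Integrable X P) :
    ∫ ω, g ω * X ω ∂P = ∫ ω, g ω * (P[X|m]) ω ∂P := by
  obtain ⟨C, hC⟩ := hgb
  have hC' : ∀ᵐ ω ∂P, ‖g ω‖ ≤ C := by simpa [Real.norm_eq_abs] using hC
  calc ∫ ω, g ω * X ω ∂P = ∫ ω, (P[(fun ω => g ω * X ω)|m]) ω ∂P :=
        (integral_condExp hm).symm
    _ = ∫ ω, g ω * (P[X|m]) ω ∂P := by
        refine integral_congr_ae ?_
        exact condExp_stronglyMeasurable_mul_of_bound hm hg hX C hC'

/-- Under the marginal excursion-effect model `P[exp(−c)·μ1 − μ0 | 𝓢] = 0` a.s.,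
for every bounded `𝓗`-measurable working model `h`,
`E[S·W·(Y·exp(−c·A) − h)·(A − p̃)] = E[S·p̃·(1−p̃)·(exp(−c)·μ1 − μ0)] = 0`. -/
theorem weighted_centered_estimating_function_unbiased
    {Ω : Type*} {m𝓗 : MeasurableSpace Ω} {m𝓢 : MeasurableSpace Ω} {mΩ : MeasurableSpace Ω} {P : Measure Ω} [IsProbabilityMeasure P]
    (h𝓗 : m𝓗 ≤ mΩ)
    {A : Ω → ℝ} (hA : Measurable A)
    (hA01 : ∀ᵐ ω ∂P, A ω = 0 ∨ A ω = 1)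
    {ε : ℝ} (hε0 : 0 < ε) (hε2 : ε < 1 / 2)
    (hp : ∀ᵐ ω ∂P, ε ≤ (P[A | m𝓗]) ω ∧ (P[A | m𝓗]) ω ≤ 1 - ε)
    {Y : Ω → ℝ} (hY : Measurable Y) {CY : ℝ} (hYb : ∀ᵐ ω ∂P, |Y ω| ≤ CY)
    {μ1 μ0 : Ω → ℝ} (hμ1 : Measurable[m𝓗] μ1) (hμ0 : Measurable[m𝓗] μ0)
    (hμ1p : (fun ω => μ1 ω * (P[A | m𝓗]) ω) =ᵐ[P] P[(fun ω => Y ω * A ω) | m𝓗])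
    (hμ0p : (fun ω => μ0 ω * (1 - (P[A | m𝓗]) ω)) =ᵐ[P]
      P[(fun ω => Y ω * (1 - A ω)) | m𝓗])
    {ptil : Ω → ℝ}
    (hptil : ∀ᵐ ω ∂P, ε ≤ ptil ω ∧ ptil ω ≤ 1 - ε)
    {W : Ω → ℝ}
    (hW : W = fun ω => (ptil ω / (P[A | m𝓗]) ω) ^ (A ω)
      * ((1 - ptil ω) / (1 - (P[A | m𝓗]) ω)) ^ (1 - A ω))
    (h𝓢 : m𝓢 ≤ m𝓗)
    {c S : Ω → ℝ} (hc : Measurable[m𝓢] c) {Cc : ℝ} (hcb : ∀ᵐ ω ∂P, |c ω| ≤ Cc)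
    (hS : Measurable[m𝓢] S) {CS : ℝ} (hSb : ∀ᵐ ω ∂P, |S ω| ≤ CS)
    (hptilmeas : Measurable[m𝓢] ptil)
    (hmodel : P[(fun ω => Real.exp (-c ω) * μ1 ω - μ0 ω) | m𝓢] =ᵐ[P] (fun _ => (0 : ℝ))) :
    (∀ h : Ω → ℝ, Measurable[m𝓗] h → (∃ Ch : ℝ, ∀ᵐ ω ∂P, |h ω| ≤ Ch) →
      ∫ ω, S ω * W ω * (Y ω * Real.exp (-(c ω * A ω)) - h ω) * (A ω - ptil ω) ∂P
        = ∫ ω, S ω * ptil ω * (1 - ptil ω) * (Real.exp (-c ω) * μ1 ω - μ0 ω) ∂P)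
    ∧ ∫ ω, S ω * ptil ω * (1 - ptil ω) * (Real.exp (-c ω) * μ1 ω - μ0 ω) ∂P = 0 := by
  subst hW
  set p : Ω → ℝ := P[A | m𝓗] with hpdef
  -- basic measurability facts
  have hS𝓗 : Measurable[m𝓗] S := hS.mono h𝓢 le_rfl
  have hc𝓗 : Measurable[m𝓗] c := hc.mono h𝓢 le_rfl
  have hpt𝓗 : Measurable[m𝓗] ptil := hptilmeas.mono h𝓢 le_rfl
  have hp𝓗 : Measurable[m𝓗] p := stronglyMeasurable_condExp.measurable
  have hcm : Measurable[mΩ] c := hc.mono (h𝓢.trans h𝓗) le_rfl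
  have hμ1m : Measurable[mΩ] μ1 := hμ1.mono h𝓗 le_rfl
  have hμ0m : Measurable[mΩ] μ0 := hμ0.mono h𝓗 le_rfl
  have hAm : Measurable[mΩ] A := hA
  have hYm : Measurable[mΩ] Y := hY
  -- basic bounds
  have hCY0 : 0 ≤ CY := by
    have hne : (MeasureTheory.ae P).NeBot := ae_neBot.2 (IsProbabilityMeasure.ne_zero P)
    obtain ⟨ω, hω⟩ := hYb.exists
    exact (abs_nonneg _).trans hω
  have hA1 : ∀ᵐ ω ∂P, |A ω| ≤ 1 := by
    filter_upwards [hA01] with ω hω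
    rcases hω with h | h <;> simp [h]
  have h1A1 : ∀ᵐ ω ∂P, |1 - A ω| ≤ 1 := by
    filter_upwards [hA01] with ω hω
    rcases hω with h | h <;> simp [h]
  have hX1b : ∀ᵐ ω ∂P, |Y ω * A ω| ≤ CY := by
    filter_upwards [hYb, hA1] with ω h1 h2
    rw [abs_mul]
    calc |Y ω| * |A ω| ≤ CY * 1 := mul_le_mul h1 h2 (abs_nonneg _) hCY0
      _ = CY := mul_one _
  have hX3b : ∀ᵐ ω ∂P, |Y ω * (1 - A ω)| ≤ CY := by
    filter_upwards [hYb, h1A1] with ω h1 h2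
    rw [abs_mul]
    calc |Y ω| * |1 - A ω| ≤ CY * 1 := mul_le_mul h1 h2 (abs_nonneg _) hCY0
      _ = CY := mul_one _
  have hq1 : ∀ᵐ ω ∂P, |ptil ω / p ω| ≤ ε⁻¹ := by
    filter_upwards [hp, hptil] with ω hpω hptω
    have hp0 : 0 < p ω := hε0.trans_le hpω.1
    have hpt0 : 0 ≤ ptil ω := (hε0.le).trans hptω.1
    rw [abs_of_nonneg (div_nonneg hpt0 hp0.le), div_le_iff₀ hp0]
    nlinarith [mul_le_mul_of_nonneg_left hpω.1 (inv_nonneg.2 hε0.le),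
      inv_mul_cancel₀ hε0.ne']
  have hq2 : ∀ᵐ ω ∂P, |(1 - ptil ω) / (1 - p ω)| ≤ ε⁻¹ := by
    filter_upwards [hp, hptil] with ω hpω hptω
    have hp0 : 0 < 1 - p ω := by nlinarith
    have hpt0 : 0 ≤ 1 - ptil ω := by nlinarith
    rw [abs_of_nonneg (div_nonneg hpt0 hp0.le), div_le_iff₀ hp0]
    nlinarith [mul_le_mul_of_nonneg_left (show ε ≤ 1 - p ω by nlinarith)
      (inv_nonneg.2 hε0.le), inv_mul_cancel₀ hε0.ne']
  have hptb : ∀ᵐ ω ∂P, |ptil ω| ≤ 1 := by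
    filter_upwards [hptil] with ω hω
    rw [abs_of_nonneg (hε0.le.trans hω.1)]; nlinarith [hω.2]
  have h1ptb : ∀ᵐ ω ∂P, |1 - ptil ω| ≤ 1 := by
    filter_upwards [hptil] with ω hω
    rw [abs_of_nonneg (by nlinarith [hω.2] : (0:ℝ) ≤ 1 - ptil ω)]
    nlinarith [hω.1]
  have hecb : ∀ᵐ ω ∂P, |Real.exp (-c ω)| ≤ Real.exp Cc := by
    filter_upwards [hcb] with ω hω
    rw [abs_of_pos (Real.exp_pos _)]
    exact Real.exp_le_exp.2 (by cases abs_le.1 hω; linarith)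
  -- bounds on μ1 and μ0
  have hcX1b : ∀ᵐ ω ∂P, |(P[(fun ω => Y ω * A ω) | m𝓗]) ω| ≤ CY := by
    have := ae_bdd_condExp_of_ae_bdd (m := m𝓗) (μ := P) (R := CY.toNNReal)
      (f := fun ω => Y ω * A ω) (by
        filter_upwards [hX1b] with ω hω
        rwa [Real.coe_toNNReal _ hCY0])
    filter_upwards [this] with ω hω
    rwa [Real.coe_toNNReal _ hCY0] at hω
  have hcX3b : ∀ᵐ ω ∂P, |(P[(fun ω => Y ω * (1 - A ω)) | m𝓗]) ω| ≤ CY := by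
    have := ae_bdd_condExp_of_ae_bdd (m := m𝓗) (μ := P) (R := CY.toNNReal)
      (f := fun ω => Y ω * (1 - A ω)) (by
        filter_upwards [hX3b] with ω hω
        rwa [Real.coe_toNNReal _ hCY0])
    filter_upwards [this] with ω hω
    rwa [Real.coe_toNNReal _ hCY0] at hω
  have hμ1b : ∀ᵐ ω ∂P, |μ1 ω| ≤ CY / ε := by
    filter_upwards [hμ1p, hcX1b, hp] with ω he hb hpω
    have h1 : |μ1 ω| * p ω ≤ CY := by
      have : |μ1 ω * p ω| ≤ CY := he ▸ hb
      rwa [abs_mul, abs_of_nonneg (hε0.le.trans hpω.1)] at this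
    rw [le_div_iff₀ hε0]
    nlinarith [abs_nonneg (μ1 ω), hpω.1]
  have hμ0b : ∀ᵐ ω ∂P, |μ0 ω| ≤ CY / ε := by
    filter_upwards [hμ0p, hcX3b, hp] with ω he hb hpω
    have h1 : |μ0 ω| * (1 - p ω) ≤ CY := by
      have : |μ0 ω * (1 - p ω)| ≤ CY := he ▸ hb
      rwa [abs_mul, abs_of_nonneg (show (0:ℝ) ≤ 1 - p ω by nlinarith [hpω.2])] at this
    rw [le_div_iff₀ hε0]
    nlinarith [abs_nonneg (μ0 ω), hpω.2]
  -- part 2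
  have part2 : ∫ ω, S ω * ptil ω * (1 - ptil ω) * (Real.exp (-c ω) * μ1 ω - μ0 ω) ∂P = 0 := by
    have hTmeas : StronglyMeasurable[m𝓢] (fun ω => S ω * ptil ω * (1 - ptil ω)) :=
      ((hS.mul hptilmeas).mul (measurable_const.sub hptilmeas)).stronglyMeasurable
    have hTb : ∃ C, ∀ᵐ ω ∂P, |S ω * ptil ω * (1 - ptil ω)| ≤ C :=
      aebdd_mul' (aebdd_mul' ⟨CS, hSb⟩ ⟨1, hptb⟩) ⟨1, h1ptb⟩
    have hDint : Integrable (fun ω => Real.exp (-c ω) * μ1 ω - μ0 ω) P := by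
      obtain ⟨C, hC⟩ := aebdd_sub' (aebdd_mul' ⟨Real.exp Cc, hecb⟩ ⟨CY / ε, hμ1b⟩)
        ⟨CY / ε, hμ0b⟩
      exact bdd_integrable'
        ((hcm.neg.exp.mul hμ1m).sub hμ0m).aestronglyMeasurable hC
    rw [pull_out' (h𝓢.trans h𝓗) hTmeas hTb hDint]
    rw [show (0:ℝ) = ∫ ω, S ω * ptil ω * (1 - ptil ω) * (0:ℝ) ∂P by simp]
    refine integral_congr_ae ?_
    filter_upwards [hmodel] with ω hω
    rw [hω]
  refine ⟨?_, part2⟩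
  intro h hh hhb
  obtain ⟨Ch, hhb⟩ := hhb
  have hhm : Measurable[mΩ] h := hh.mono h𝓗 le_rfl
  -- the four functions
  set g1 : Ω → ℝ := fun ω => S ω * (ptil ω / p ω) * (1 - ptil ω) * Real.exp (-c ω)
    with hg1def
  set g2 : Ω → ℝ := fun ω =>
      -(S ω * (ptil ω / p ω) * (1 - ptil ω) * h ω)
        - S ω * ptil ω * ((1 - ptil ω) / (1 - p ω)) * h ω with hg2def
  set g3 : Ω → ℝ := fun ω => -(S ω * ptil ω * ((1 - ptil ω) / (1 - p ω))) with hg3def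
  set g4 : Ω → ℝ := fun ω => S ω * ptil ω * ((1 - ptil ω) / (1 - p ω)) * h ω with hg4def
  -- bounds
  have bS : ∃ C, ∀ᵐ ω ∂P, |S ω| ≤ C := ⟨CS, hSb⟩
  have bq1 : ∃ C, ∀ᵐ ω ∂P, |ptil ω / p ω| ≤ C := ⟨ε⁻¹, hq1⟩
  have bq2 : ∃ C, ∀ᵐ ω ∂P, |(1 - ptil ω) / (1 - p ω)| ≤ C := ⟨ε⁻¹, hq2⟩
  have bpt : ∃ C, ∀ᵐ ω ∂P, |ptil ω| ≤ C := ⟨1, hptb⟩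
  have b1pt : ∃ C, ∀ᵐ ω ∂P, |1 - ptil ω| ≤ C := ⟨1, h1ptb⟩
  have bec : ∃ C, ∀ᵐ ω ∂P, |Real.exp (-c ω)| ≤ C := ⟨Real.exp Cc, hecb⟩
  have bh : ∃ C, ∀ᵐ ω ∂P, |h ω| ≤ C := ⟨Ch, hhb⟩
  have bg1 : ∃ C, ∀ᵐ ω ∂P, |g1 ω| ≤ C :=
    aebdd_mul' (aebdd_mul' (aebdd_mul' bS bq1) b1pt) bec
  have bg4 : ∃ C, ∀ᵐ ω ∂P, |g4 ω| ≤ C :=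
    aebdd_mul' (aebdd_mul' (aebdd_mul' bS bpt) bq2) bh
  have bg2 : ∃ C, ∀ᵐ ω ∂P, |g2 ω| ≤ C := by
    have b1 : ∃ C, ∀ᵐ ω ∂P, |S ω * (ptil ω / p ω) * (1 - ptil ω) * h ω| ≤ C :=
      aebdd_mul' (aebdd_mul' (aebdd_mul' bS bq1) b1pt) bh
    obtain ⟨C1, h1⟩ := b1
    obtain ⟨C2, h2⟩ := bg4
    refine ⟨C1 + C2, ?_⟩
    filter_upwards [h1, h2] with ω h1 h2
    simp only [hg2def]
    calc |-(S ω * (ptil ω / p ω) * (1 - ptil ω) * h ω)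
          - S ω * ptil ω * ((1 - ptil ω) / (1 - p ω)) * h ω|
        ≤ |-(S ω * (ptil ω / p ω) * (1 - ptil ω) * h ω)|
          + |S ω * ptil ω * ((1 - ptil ω) / (1 - p ω)) * h ω| := abs_sub _ _
      _ ≤ C1 + C2 := by rw [abs_neg]; exact add_le_add h1 h2
  have bg3 : ∃ C, ∀ᵐ ω ∂P, |g3 ω| ≤ C := by
    obtain ⟨C, hC⟩ := aebdd_mul' (aebdd_mul' bS bpt) bq2
    exact ⟨C, by filter_upwards [hC] with ω hω; simpa [hg3def, abs_neg] using hω⟩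
  -- measurability
  have mg1 : StronglyMeasurable[m𝓗] g1 :=
    (((hS𝓗.mul (hpt𝓗.div hp𝓗)).mul (measurable_const.sub hpt𝓗)).mul
      hc𝓗.neg.exp).stronglyMeasurable
  have mg4 : StronglyMeasurable[m𝓗] g4 :=
    (((hS𝓗.mul hpt𝓗).mul ((measurable_const.sub hpt𝓗).div
      (measurable_const.sub hp𝓗))).mul hh).stronglyMeasurable
  have mg2 : StronglyMeasurable[m𝓗] g2 :=
    (((((hS𝓗.mul (hpt𝓗.div hp𝓗)).mul (measurable_const.sub hpt𝓗)).mul hh).neg).sub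
      (((hS𝓗.mul hpt𝓗).mul ((measurable_const.sub hpt𝓗).div
        (measurable_const.sub hp𝓗))).mul hh)).stronglyMeasurable
  have mg3 : StronglyMeasurable[m𝓗] g3 :=
    (((hS𝓗.mul hpt𝓗).mul ((measurable_const.sub hpt𝓗).div
      (measurable_const.sub hp𝓗))).neg).stronglyMeasurable
  -- integrability of X's
  have iX1 : Integrable (fun ω => Y ω * A ω) P :=
    bdd_integrable' (hYm.mul hAm).aestronglyMeasurable hX1b
  have iA : Integrable A P := bdd_integrable' hAm.aestronglyMeasurable hA1
  have iX3 : Integrable (fun ω => Y ω * (1 - A ω)) P :=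
    bdd_integrable' (hYm.mul (measurable_const.sub hAm)).aestronglyMeasurable hX3b
  -- pointwise decomposition
  have hfeq : (fun ω => S ω * ((ptil ω / p ω) ^ (A ω)
        * ((1 - ptil ω) / (1 - p ω)) ^ (1 - A ω))
        * (Y ω * Real.exp (-(c ω * A ω)) - h ω) * (A ω - ptil ω))
      =ᵐ[P] fun ω => g1 ω * (Y ω * A ω) + g2 ω * A ω
        + g3 ω * (Y ω * (1 - A ω)) + g4 ω := by
    filter_upwards [hA01] with ω hω
    simp only [hg1def, hg2def, hg3def, hg4def]
    rcases hω with h0 | h1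
    · rw [h0]
      norm_num [Real.rpow_zero, Real.rpow_one]
      ring
    · rw [h1]
      norm_num [Real.rpow_zero, Real.rpow_one]
      ring
  -- integrability of the four terms
  have iT1 : Integrable (fun ω => g1 ω * (Y ω * A ω)) P := by
    obtain ⟨C, hC⟩ := bg1
    exact iX1.bdd_mul (mg1.mono h𝓗).aestronglyMeasurable
      (by simpa [Real.norm_eq_abs] using hC)
  have iT2 : Integrable (fun ω => g2 ω * A ω) P := by
    obtain ⟨C, hC⟩ := bg2
    exact iA.bdd_mul (mg2.mono h𝓗).aestronglyMeasurable
      (by simpa [Real.norm_eq_abs] using hC)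
  have iT3 : Integrable (fun ω => g3 ω * (Y ω * (1 - A ω))) P := by
    obtain ⟨C, hC⟩ := bg3
    exact iX3.bdd_mul (mg3.mono h𝓗).aestronglyMeasurable
      (by simpa [Real.norm_eq_abs] using hC)
  have iT4 : Integrable g4 P := by
    obtain ⟨C, hC⟩ := bg4
    exact bdd_integrable' (mg4.mono h𝓗).aestronglyMeasurable hC
  -- integrability of the conditional-expectation versions
  have hpb : ∀ᵐ ω ∂P, |p ω| ≤ 1 := by
    filter_upwards [hp] with ω hω
    rw [abs_of_nonneg (hε0.le.trans hω.1)]; nlinarith [hω.2]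
  have iU1 : Integrable (fun ω => g1 ω * (P[(fun ω => Y ω * A ω) | m𝓗]) ω) P := by
    obtain ⟨C, hC⟩ := aebdd_mul' bg1 ⟨CY, hcX1b⟩
    exact bdd_integrable' ((mg1.mono h𝓗).aestronglyMeasurable.mul
      (stronglyMeasurable_condExp.mono h𝓗).aestronglyMeasurable) hC
  have iU2 : Integrable (fun ω => g2 ω * p ω) P := by
    obtain ⟨C, hC⟩ := aebdd_mul' bg2 ⟨1, hpb⟩
    exact bdd_integrable' ((mg2.mono h𝓗).aestronglyMeasurable.mul
      (stronglyMeasurable_condExp.mono h𝓗).aestronglyMeasurable) hC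
  have iU3 : Integrable (fun ω => g3 ω * (P[(fun ω => Y ω * (1 - A ω)) | m𝓗]) ω) P := by
    obtain ⟨C, hC⟩ := aebdd_mul' bg3 ⟨CY, hcX3b⟩
    exact bdd_integrable' ((mg3.mono h𝓗).aestronglyMeasurable.mul
      (stronglyMeasurable_condExp.mono h𝓗).aestronglyMeasurable) hC
  -- main computation
  calc ∫ ω, S ω * ((ptil ω / p ω) ^ (A ω)
        * ((1 - ptil ω) / (1 - p ω)) ^ (1 - A ω))
        * (Y ω * Real.exp (-(c ω * A ω)) - h ω) * (A ω - ptil ω) ∂P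
      = ∫ ω, (g1 ω * (Y ω * A ω) + g2 ω * A ω
          + g3 ω * (Y ω * (1 - A ω)) + g4 ω) ∂P := integral_congr_ae hfeq
    _ = (∫ ω, g1 ω * (Y ω * A ω) ∂P) + (∫ ω, g2 ω * A ω ∂P)
        + (∫ ω, g3 ω * (Y ω * (1 - A ω)) ∂P) + (∫ ω, g4 ω ∂P) := by
        have i12 : Integrable (fun ω => g1 ω * (Y ω * A ω) + g2 ω * A ω) P := iT1.add iT2
        have i123 : Integrable (fun ω => g1 ω * (Y ω * A ω) + g2 ω * A ω
            + g3 ω * (Y ω * (1 - A ω))) P := i12.add iT3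
        rw [integral_add i123 iT4, integral_add i12 iT3, integral_add iT1 iT2]
    _ = (∫ ω, g1 ω * (P[(fun ω => Y ω * A ω) | m𝓗]) ω ∂P)
        + (∫ ω, g2 ω * p ω ∂P)
        + (∫ ω, g3 ω * (P[(fun ω => Y ω * (1 - A ω)) | m𝓗]) ω ∂P)
        + (∫ ω, g4 ω ∂P) := by
        rw [pull_out' h𝓗 mg1 bg1 iX1, pull_out' h𝓗 mg2 bg2 iA, pull_out' h𝓗 mg3 bg3 iX3]
    _ = ∫ ω, (g1 ω * (P[(fun ω => Y ω * A ω) | m𝓗]) ω + g2 ω * p ω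
          + g3 ω * (P[(fun ω => Y ω * (1 - A ω)) | m𝓗]) ω + g4 ω) ∂P := by
        have i12 : Integrable (fun ω => g1 ω * (P[(fun ω => Y ω * A ω) | m𝓗]) ω
            + g2 ω * p ω) P := iU1.add iU2
        have i123 : Integrable (fun ω => g1 ω * (P[(fun ω => Y ω * A ω) | m𝓗]) ω
            + g2 ω * p ω + g3 ω * (P[(fun ω => Y ω * (1 - A ω)) | m𝓗]) ω) P := i12.add iU3
        rw [integral_add i123 iT4, integral_add i12 iU3, integral_add iU1 iU2]
    _ = ∫ ω, S ω * ptil ω * (1 - ptil ω) * (Real.exp (-c ω) * μ1 ω - μ0 ω) ∂P := by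
        refine integral_congr_ae ?_
        filter_upwards [hμ1p, hμ0p, hp] with ω e1 e2 hpω
        rw [← e1, ← e2]
        simp only [hg1def, hg2def, hg3def, hg4def]
        have hp0 : p ω ≠ 0 := (hε0.trans_le hpω.1).ne'
        have hp1 : (1:ℝ) - p ω ≠ 0 := by nlinarith [hpω.2]
        field_simp
        ring
end

section
/- E[m_D] = E[ S·p̃·(1−p̃)·((p − p̂)/(p̂·(1−p̂)))·( (1−p̂)·exp(−c)·(μ1 − μ̂1) + p̂·(μ0 − μ̂0) ) ]. That is, under the marginal excursion-effect model, the bias of the doubly robust estimating-function term m_D is a product of the error p − p̂ in the working randomization probability and the errors μ1 − μ̂1, μ0 − μ̂0 in the working outcome models. -/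
open MeasureTheory

namespace DRHelper
variable {α : Type*} {m0 : MeasurableSpace α} {P : Measure α}

lemma aeb_mul {f g : α → ℝ} {C D : ℝ} (hf : ∀ᵐ ω ∂P, |f ω| ≤ C)
    (hg : ∀ᵐ ω ∂P, |g ω| ≤ D) : ∀ᵐ ω ∂P, |f ω * g ω| ≤ C * D := by
  filter_upwards [hf, hg] with ω h1 h2
  rw [abs_mul]
  exact mul_le_mul h1 h2 (abs_nonneg _) ((abs_nonneg _).trans h1)

lemma aeb_add {f g : α → ℝ} {C D : ℝ} (hf : ∀ᵐ ω ∂P, |f ω| ≤ C)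
    (hg : ∀ᵐ ω ∂P, |g ω| ≤ D) : ∀ᵐ ω ∂P, |f ω + g ω| ≤ C + D := by
  filter_upwards [hf, hg] with ω h1 h2
  exact (abs_add_le _ _).trans (add_le_add h1 h2)

lemma aeb_sub {f g : α → ℝ} {C D : ℝ} (hf : ∀ᵐ ω ∂P, |f ω| ≤ C)
    (hg : ∀ᵐ ω ∂P, |g ω| ≤ D) : ∀ᵐ ω ∂P, |f ω - g ω| ≤ C + D := by
  filter_upwards [hf, hg] with ω h1 h2
  calc |f ω - g ω| = |f ω + -g ω| := by rw [sub_eq_add_neg]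
    _ ≤ |f ω| + |-g ω| := abs_add_le _ _
    _ = |f ω| + |g ω| := by rw [abs_neg]
    _ ≤ C + D := add_le_add h1 h2

lemma integrable_of_ae_bound [IsFiniteMeasure P] {f : α → ℝ} {C : ℝ}
    (hm : AEStronglyMeasurable f P) (hf : ∀ᵐ ω ∂P, |f ω| ≤ C) : Integrable f P :=
  ⟨hm, HasFiniteIntegral.of_bounded (C := C) (by simpa [Real.norm_eq_abs] using hf)⟩

lemma integral_mul_condexp {m : MeasurableSpace α} [IsFiniteMeasure P] (hm : m ≤ m0)
    {B X : α → ℝ} (hB : StronglyMeasurable[m] B)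
    (hBX : Integrable (fun ω => B ω * X ω) P) (hX : Integrable X P) :
    ∫ ω, B ω * X ω ∂P = ∫ ω, B ω * (P[X|m]) ω ∂P := by
  have h := condExp_mul_of_stronglyMeasurable_left hB (by exact hBX) hX
  calc ∫ ω, B ω * X ω ∂P = ∫ ω, (P[fun ω => B ω * X ω|m]) ω ∂P :=
        (integral_condExp hm).symm
    _ = ∫ ω, B ω * (P[X|m]) ω ∂P := integral_congr_ae (by filter_upwards [h] with ω hω; exact hω)

lemma integral_comb5 {f1 f2 f3 f4 f5 : α → ℝ} (h1 : Integrable f1 P) (h2 : Integrable f2 P)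
    (h3 : Integrable f3 P) (h4 : Integrable f4 P) (h5 : Integrable f5 P) :
    ∫ ω, (f1 ω - f2 ω - f3 ω + f4 ω + f5 ω) ∂P
      = ∫ ω, f1 ω ∂P - ∫ ω, f2 ω ∂P - ∫ ω, f3 ω ∂P + ∫ ω, f4 ω ∂P + ∫ ω, f5 ω ∂P := by
  calc ∫ ω, (f1 ω - f2 ω - f3 ω + f4 ω + f5 ω) ∂P
      = (∫ ω, (f1 ω - f2 ω - f3 ω + f4 ω) ∂P) + ∫ ω, f5 ω ∂P :=
        integral_add (((h1.sub h2).sub h3).add h4) h5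
    _ = ((∫ ω, (f1 ω - f2 ω - f3 ω) ∂P) + ∫ ω, f4 ω ∂P) + ∫ ω, f5 ω ∂P := by
        exact congrArg (· + ∫ ω, f5 ω ∂P) (integral_add ((h1.sub h2).sub h3) h4)
    _ = (((∫ ω, (f1 ω - f2 ω) ∂P) - ∫ ω, f3 ω ∂P) + ∫ ω, f4 ω ∂P) + ∫ ω, f5 ω ∂P := by
        exact congrArg (fun x => x + ∫ ω, f4 ω ∂P + ∫ ω, f5 ω ∂P)
          (integral_sub (h1.sub h2) h3)
    _ = _ := by
        exact congrArg (fun x => x - ∫ ω, f3 ω ∂P + ∫ ω, f4 ω ∂P + ∫ ω, f5 ω ∂P)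
          (integral_sub h1 h2)

end DRHelper

set_option maxHeartbeats 2000000 in

/-- Under the marginal excursion-effect model, the bias of the doubly robust
estimating-function term `m_D` equals
`E[S·p̃·(1−p̃)·((p − p̂)/(p̂·(1−p̂)))·((1−p̂)·exp(−c)·(μ1 − μ̂1) + p̂·(μ0 − μ̂0))]`. -/
theorem doubly_robust_estimating_function_bias
    {Ω : Type*} {m𝓗 : MeasurableSpace Ω} {m𝓢 : MeasurableSpace Ω} {mΩ : MeasurableSpace Ω} {P : Measure Ω} [IsProbabilityMeasure P]
    (h𝓗 : m𝓗 ≤ mΩ)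
    {A : Ω → ℝ} (hA : Measurable A)
    (hA01 : ∀ᵐ ω ∂P, A ω = 0 ∨ A ω = 1)
    {ε : ℝ} (hε0 : 0 < ε) (hε2 : ε < 1 / 2)
    (hp : ∀ᵐ ω ∂P, ε ≤ (P[A | m𝓗]) ω ∧ (P[A | m𝓗]) ω ≤ 1 - ε)
    {Y : Ω → ℝ} (hY : Measurable Y) {CY : ℝ} (hYb : ∀ᵐ ω ∂P, |Y ω| ≤ CY)
    {μ1 μ0 : Ω → ℝ} (hμ1 : Measurable[m𝓗] μ1) (hμ0 : Measurable[m𝓗] μ0)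
    (hμ1p : (fun ω => μ1 ω * (P[A | m𝓗]) ω) =ᵐ[P] P[(fun ω => Y ω * A ω) | m𝓗])
    (hμ0p : (fun ω => μ0 ω * (1 - (P[A | m𝓗]) ω)) =ᵐ[P]
      P[(fun ω => Y ω * (1 - A ω)) | m𝓗])
    {ptil phat : Ω → ℝ}
    (hptilmeas𝓗 : Measurable[m𝓗] ptil) (hphatmeas : Measurable[m𝓗] phat)
    (hptil : ∀ᵐ ω ∂P, ε ≤ ptil ω ∧ ptil ω ≤ 1 - ε)
    (hphat : ∀ᵐ ω ∂P, ε ≤ phat ω ∧ phat ω ≤ 1 - ε)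
    {What : Ω → ℝ}
    (hWhat : What = fun ω => (ptil ω / phat ω) ^ (A ω)
      * ((1 - ptil ω) / (1 - phat ω)) ^ (1 - A ω))
    (h𝓢 : m𝓢 ≤ m𝓗)
    {c S : Ω → ℝ} (hc : Measurable[m𝓢] c) {Cc : ℝ} (hcb : ∀ᵐ ω ∂P, |c ω| ≤ Cc)
    (hS : Measurable[m𝓢] S) {CS : ℝ} (hSb : ∀ᵐ ω ∂P, |S ω| ≤ CS)
    (hptilmeas : Measurable[m𝓢] ptil)
    (hmodel : P[(fun ω => Real.exp (-c ω) * μ1 ω - μ0 ω) | m𝓢] =ᵐ[P] (fun _ => (0 : ℝ)))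
    {μhat1 μhat0 : Ω → ℝ}
    (hμhat1 : Measurable[m𝓗] μhat1) {C1 : ℝ} (hμhat1b : ∀ᵐ ω ∂P, |μhat1 ω| ≤ C1)
    (hμhat0 : Measurable[m𝓗] μhat0) {C0 : ℝ} (hμhat0b : ∀ᵐ ω ∂P, |μhat0 ω| ≤ C0)
    {mD : Ω → ℝ}
    (hmD : mD = fun ω =>
      S ω * What ω * (Y ω - (A ω * μhat1 ω + (1 - A ω) * μhat0 ω))
          * Real.exp (-(c ω * A ω)) * (A ω - ptil ω)
        + S ω * ptil ω * (1 - ptil ω) * (μhat1 ω * Real.exp (-c ω) - μhat0 ω)) :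
    ∫ ω, mD ω ∂P
      = ∫ ω, S ω * ptil ω * (1 - ptil ω)
          * (((P[A | m𝓗]) ω - phat ω) / (phat ω * (1 - phat ω)))
          * ((1 - phat ω) * Real.exp (-c ω) * (μ1 ω - μhat1 ω)
            + phat ω * (μ0 ω - μhat0 ω)) ∂P := by
  classical
  -- measurability w.r.t. the ambient σ-algebra
  have mS : Measurable[mΩ] S := hS.mono (h𝓢.trans h𝓗) le_rfl
  have mc : Measurable[mΩ] c := hc.mono (h𝓢.trans h𝓗) le_rfl
  have mptil : Measurable[mΩ] ptil := hptilmeas𝓗.mono h𝓗 le_rfl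
  have mphat : Measurable[mΩ] phat := hphatmeas.mono h𝓗 le_rfl
  have mμ1 : Measurable[mΩ] μ1 := hμ1.mono h𝓗 le_rfl
  have mμ0 : Measurable[mΩ] μ0 := hμ0.mono h𝓗 le_rfl
  have mμh1 : Measurable[mΩ] μhat1 := hμhat1.mono h𝓗 le_rfl
  have mμh0 : Measurable[mΩ] μhat0 := hμhat0.mono h𝓗 le_rfl
  have mp : Measurable[mΩ] (P[A|m𝓗]) := (stronglyMeasurable_condExp.mono h𝓗).measurable
  have mexp : Measurable[mΩ] (fun ω => Real.exp (-c ω)) := Real.measurable_exp.comp mc.neg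
  -- atom bounds
  have bA : ∀ᵐ ω ∂P, |A ω| ≤ 1 := by
    filter_upwards [hA01] with ω h; rcases h with h | h <;> simp [h]
  have b1A : ∀ᵐ ω ∂P, |1 - A ω| ≤ 1 := by
    filter_upwards [hA01] with ω h; rcases h with h | h <;> simp [h]
  have bpt : ∀ᵐ ω ∂P, |ptil ω| ≤ 1 := by
    filter_upwards [hptil] with ω h; rw [abs_le]; constructor <;> linarith [h.1, h.2]
  have b1pt : ∀ᵐ ω ∂P, |1 - ptil ω| ≤ 1 := by
    filter_upwards [hptil] with ω h; rw [abs_le]; constructor <;> linarith [h.1, h.2]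
  have bph : ∀ᵐ ω ∂P, |phat ω| ≤ 1 := by
    filter_upwards [hphat] with ω h; rw [abs_le]; constructor <;> linarith [h.1, h.2]
  have b1ph : ∀ᵐ ω ∂P, |1 - phat ω| ≤ 1 := by
    filter_upwards [hphat] with ω h; rw [abs_le]; constructor <;> linarith [h.1, h.2]
  have bp : ∀ᵐ ω ∂P, |(P[A|m𝓗]) ω| ≤ 1 := by
    filter_upwards [hp] with ω h; rw [abs_le]; constructor <;> linarith [h.1, h.2]
  have b1p : ∀ᵐ ω ∂P, |1 - (P[A|m𝓗]) ω| ≤ 1 := by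
    filter_upwards [hp] with ω h; rw [abs_le]; constructor <;> linarith [h.1, h.2]
  have binvph : ∀ᵐ ω ∂P, |(phat ω)⁻¹| ≤ ε⁻¹ := by
    filter_upwards [hphat] with ω h
    have h0 : 0 < phat ω := lt_of_lt_of_le hε0 h.1
    rw [abs_of_pos (inv_pos.2 h0)]
    exact inv_anti₀ hε0 h.1
  have binv1ph : ∀ᵐ ω ∂P, |(1 - phat ω)⁻¹| ≤ ε⁻¹ := by
    filter_upwards [hphat] with ω h
    have h0 : 0 < 1 - phat ω := by linarith [h.2]
    rw [abs_of_pos (inv_pos.2 h0)]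
    exact inv_anti₀ hε0 (by linarith [h.2])
  have bexp : ∀ᵐ ω ∂P, |Real.exp (-c ω)| ≤ Real.exp Cc := by
    filter_upwards [hcb] with ω h
    rw [abs_of_pos (Real.exp_pos _)]
    exact Real.exp_le_exp.2 (by rw [abs_le] at h; linarith [h.1])
  have hCY0 : 0 ≤ CY := by
    obtain ⟨ω, h⟩ := hYb.exists; exact (abs_nonneg _).trans h
  -- bounds on μ1, μ0
  have bEYA := ae_bdd_condExp_of_ae_bdd (m := m𝓗) (R := ⟨CY, hCY0⟩)
    (by simpa using DRHelper.aeb_mul hYb bA : ∀ᵐ ω ∂P, |Y ω * A ω| ≤ ((⟨CY, hCY0⟩ : NNReal) : ℝ))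
  have bEY1A := ae_bdd_condExp_of_ae_bdd (m := m𝓗) (R := ⟨CY, hCY0⟩)
    (by simpa using DRHelper.aeb_mul hYb b1A :
      ∀ᵐ ω ∂P, |Y ω * (1 - A ω)| ≤ ((⟨CY, hCY0⟩ : NNReal) : ℝ))
  have bμ1 : ∀ᵐ ω ∂P, |μ1 ω| ≤ CY / ε := by
    filter_upwards [hμ1p, bEYA, hp] with ω heq hb h
    rw [le_div_iff₀ hε0]
    calc |μ1 ω| * ε ≤ |μ1 ω| * (P[A|m𝓗]) ω := mul_le_mul_of_nonneg_left h.1 (abs_nonneg _)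
      _ = |μ1 ω * (P[A|m𝓗]) ω| := by rw [abs_mul, abs_of_nonneg (hε0.le.trans h.1)]
      _ ≤ CY := by rw [heq]; exact hb
  have bμ0 : ∀ᵐ ω ∂P, |μ0 ω| ≤ CY / ε := by
    filter_upwards [hμ0p, bEY1A, hp] with ω heq hb h
    have h1 : ε ≤ 1 - (P[A|m𝓗]) ω := by linarith [h.2]
    rw [le_div_iff₀ hε0]
    calc |μ0 ω| * ε ≤ |μ0 ω| * (1 - (P[A|m𝓗]) ω) := mul_le_mul_of_nonneg_left h1 (abs_nonneg _)
      _ = |μ0 ω * (1 - (P[A|m𝓗]) ω)| := by rw [abs_mul, abs_of_nonneg (hε0.le.trans h1)]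
      _ ≤ CY := by rw [heq]; exact hb
  have mA : Measurable[mΩ] A := hA
  have mY : Measurable[mΩ] Y := hY
  have hS𝓗 : Measurable[m𝓗] S := hS.mono h𝓢 le_rfl
  have hc𝓗 : Measurable[m𝓗] c := hc.mono h𝓢 le_rfl
  -- basic integrable functions
  have iA : Integrable A P := DRHelper.integrable_of_ae_bound mA.aestronglyMeasurable bA
  have i1A : Integrable (fun ω => 1 - A ω) P :=
    DRHelper.integrable_of_ae_bound (measurable_const.sub mA).aestronglyMeasurable b1A
  have iYA : Integrable (fun ω => Y ω * A ω) P :=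
    DRHelper.integrable_of_ae_bound (mY.mul mA).aestronglyMeasurable (DRHelper.aeb_mul hYb bA)
  have iY1A : Integrable (fun ω => Y ω * (1 - A ω)) P :=
    DRHelper.integrable_of_ae_bound (mY.mul (measurable_const.sub mA)).aestronglyMeasurable
      (DRHelper.aeb_mul hYb b1A)
  -- the five pieces
  have mT : Measurable[mΩ] (fun ω => S ω * ptil ω * (1 - ptil ω)) :=
    (mS.mul mptil).mul (measurable_const.sub mptil)
  have bT := DRHelper.aeb_mul (DRHelper.aeb_mul hSb bpt) b1pt
  have mB1 : Measurable[mΩ] (fun ω => S ω * ptil ω * (1 - ptil ω) * Real.exp (-c ω) / phat ω) :=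
    (mT.mul mexp).div mphat
  have bB1 := DRHelper.aeb_mul (DRHelper.aeb_mul bT bexp) binvph
  have mB2 : Measurable[mΩ]
      (fun ω => S ω * ptil ω * (1 - ptil ω) * Real.exp (-c ω) * μhat1 ω / phat ω) :=
    ((mT.mul mexp).mul mμh1).div mphat
  have bB2 := DRHelper.aeb_mul (DRHelper.aeb_mul (DRHelper.aeb_mul bT bexp) hμhat1b) binvph
  have mB3 : Measurable[mΩ] (fun ω => S ω * ptil ω * (1 - ptil ω) / (1 - phat ω)) :=
    mT.div (measurable_const.sub mphat)
  have bB3 := DRHelper.aeb_mul bT binv1ph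
  have mB4 : Measurable[mΩ] (fun ω => S ω * ptil ω * (1 - ptil ω) * μhat0 ω / (1 - phat ω)) :=
    (mT.mul mμh0).div (measurable_const.sub mphat)
  have bB4 := DRHelper.aeb_mul (DRHelper.aeb_mul bT hμhat0b) binv1ph
  have if1 : Integrable (fun ω =>
      S ω * ptil ω * (1 - ptil ω) * Real.exp (-c ω) / phat ω * (Y ω * A ω)) P :=
    DRHelper.integrable_of_ae_bound (mB1.mul (mY.mul mA)).aestronglyMeasurable
      (DRHelper.aeb_mul bB1 (DRHelper.aeb_mul hYb bA))
  have if2 : Integrable (fun ω =>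
      S ω * ptil ω * (1 - ptil ω) * Real.exp (-c ω) * μhat1 ω / phat ω * A ω) P :=
    DRHelper.integrable_of_ae_bound (mB2.mul mA).aestronglyMeasurable
      (DRHelper.aeb_mul bB2 bA)
  have if3 : Integrable (fun ω =>
      S ω * ptil ω * (1 - ptil ω) / (1 - phat ω) * (Y ω * (1 - A ω))) P :=
    DRHelper.integrable_of_ae_bound (mB3.mul (mY.mul (measurable_const.sub mA))).aestronglyMeasurable
      (DRHelper.aeb_mul bB3 (DRHelper.aeb_mul hYb b1A))
  have if4 : Integrable (fun ω =>
      S ω * ptil ω * (1 - ptil ω) * μhat0 ω / (1 - phat ω) * (1 - A ω)) P :=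
    DRHelper.integrable_of_ae_bound (mB4.mul (measurable_const.sub mA)).aestronglyMeasurable
      (DRHelper.aeb_mul bB4 b1A)
  have if5 : Integrable (fun ω =>
      S ω * ptil ω * (1 - ptil ω) * (μhat1 ω * Real.exp (-c ω) - μhat0 ω)) P :=
    DRHelper.integrable_of_ae_bound
      (mT.mul ((mμh1.mul mexp).sub mμh0)).aestronglyMeasurable
      (DRHelper.aeb_mul bT (DRHelper.aeb_sub (DRHelper.aeb_mul hμhat1b bexp) hμhat0b))
  -- decomposition of mD
  have hmDf : mD =ᵐ[P] (fun ω =>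
      S ω * ptil ω * (1 - ptil ω) * Real.exp (-c ω) / phat ω * (Y ω * A ω)
      - S ω * ptil ω * (1 - ptil ω) * Real.exp (-c ω) * μhat1 ω / phat ω * A ω
      - S ω * ptil ω * (1 - ptil ω) / (1 - phat ω) * (Y ω * (1 - A ω))
      + S ω * ptil ω * (1 - ptil ω) * μhat0 ω / (1 - phat ω) * (1 - A ω)
      + S ω * ptil ω * (1 - ptil ω) * (μhat1 ω * Real.exp (-c ω) - μhat0 ω)) := by
    rw [hmD, hWhat]
    filter_upwards [hA01, hptil, hphat] with ω hA01ω hpt hph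
    have hph0 : phat ω ≠ 0 := (lt_of_lt_of_le hε0 hph.1).ne'
    have hph1 : (1 : ℝ) - phat ω ≠ 0 := (by linarith [hph.2] : (0:ℝ) < 1 - phat ω).ne'
    rcases hA01ω with h | h
    · simp only [h, mul_zero, zero_mul, mul_one, one_mul, sub_zero, zero_add, add_zero,
        neg_zero, Real.exp_zero, Real.rpow_zero, Real.rpow_one, zero_sub]
      field_simp
      ring
    · simp only [h, mul_one, one_mul, sub_self, Real.rpow_one, Real.rpow_zero, mul_zero,
        zero_mul, add_zero, zero_add, sub_zero]
      field_simp
  -- conditional expectation of 1 - A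
  have hE1A : P[(fun ω => 1 - A ω)|m𝓗] =ᵐ[P] (fun ω => 1 - (P[A|m𝓗]) ω) := by
    have h := condExp_sub (m := m𝓗) (μ := P) (f := fun _ => (1:ℝ)) (g := A)
      (integrable_const 1) iA
    have h2 : P[(fun ω => 1 - A ω)|m𝓗] =ᵐ[P] P[fun _ => (1:ℝ)|m𝓗] - P[A|m𝓗] := h
    refine h2.trans ?_
    rw [condExp_const h𝓗]
    exact Filter.EventuallyEq.rfl
  -- pull-out for each of the four pieces
  have pull1 : ∫ ω, S ω * ptil ω * (1 - ptil ω) * Real.exp (-c ω) / phat ω * (Y ω * A ω) ∂P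
      = ∫ ω, S ω * ptil ω * (1 - ptil ω) * Real.exp (-c ω) / phat ω
          * (μ1 ω * (P[A|m𝓗]) ω) ∂P := by
    rw [DRHelper.integral_mul_condexp h𝓗
      (B := fun ω => S ω * ptil ω * (1 - ptil ω) * Real.exp (-c ω) / phat ω)
      ((((hS𝓗.mul hptilmeas𝓗).mul (measurable_const.sub hptilmeas𝓗)).mul
        hc𝓗.neg.exp |>.div hphatmeas).stronglyMeasurable) if1 iYA]
    exact integral_congr_ae (by filter_upwards [hμ1p] with ω hω; rw [← hω])
  have pull2 : ∫ ω, S ω * ptil ω * (1 - ptil ω) * Real.exp (-c ω) * μhat1 ω / phat ω * A ω ∂P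
      = ∫ ω, S ω * ptil ω * (1 - ptil ω) * Real.exp (-c ω) * μhat1 ω / phat ω
          * (P[A|m𝓗]) ω ∂P :=
    DRHelper.integral_mul_condexp h𝓗
      (((((hS𝓗.mul hptilmeas𝓗).mul (measurable_const.sub hptilmeas𝓗)).mul
        hc𝓗.neg.exp).mul hμhat1 |>.div hphatmeas).stronglyMeasurable)
      if2 iA
  have pull3 : ∫ ω, S ω * ptil ω * (1 - ptil ω) / (1 - phat ω) * (Y ω * (1 - A ω)) ∂P
      = ∫ ω, S ω * ptil ω * (1 - ptil ω) / (1 - phat ω)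
          * (μ0 ω * (1 - (P[A|m𝓗]) ω)) ∂P := by
    rw [DRHelper.integral_mul_condexp h𝓗
      (B := fun ω => S ω * ptil ω * (1 - ptil ω) / (1 - phat ω))
      (((hS𝓗.mul hptilmeas𝓗).mul (measurable_const.sub hptilmeas𝓗) |>.div
        (measurable_const.sub hphatmeas)).stronglyMeasurable) if3 iY1A]
    exact integral_congr_ae (by filter_upwards [hμ0p] with ω hω; rw [← hω])
  have pull4 : ∫ ω, S ω * ptil ω * (1 - ptil ω) * μhat0 ω / (1 - phat ω) * (1 - A ω) ∂P
      = ∫ ω, S ω * ptil ω * (1 - ptil ω) * μhat0 ω / (1 - phat ω)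
          * (1 - (P[A|m𝓗]) ω) ∂P := by
    rw [DRHelper.integral_mul_condexp h𝓗
      (B := fun ω => S ω * ptil ω * (1 - ptil ω) * μhat0 ω / (1 - phat ω))
      ((((hS𝓗.mul hptilmeas𝓗).mul (measurable_const.sub hptilmeas𝓗)).mul hμhat0 |>.div
        (measurable_const.sub hphatmeas)).stronglyMeasurable) if4 i1A]
    exact integral_congr_ae (by filter_upwards [hE1A] with ω hω; rw [hω])
  -- integrability of the substituted pieces
  have ig1 : Integrable (fun ω =>
      S ω * ptil ω * (1 - ptil ω) * Real.exp (-c ω) / phat ω * (μ1 ω * (P[A|m𝓗]) ω)) P :=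
    DRHelper.integrable_of_ae_bound (mB1.mul (mμ1.mul mp)).aestronglyMeasurable
      (DRHelper.aeb_mul bB1 (DRHelper.aeb_mul bμ1 bp))
  have ig2 : Integrable (fun ω =>
      S ω * ptil ω * (1 - ptil ω) * Real.exp (-c ω) * μhat1 ω / phat ω * (P[A|m𝓗]) ω) P :=
    DRHelper.integrable_of_ae_bound (mB2.mul mp).aestronglyMeasurable
      (DRHelper.aeb_mul bB2 bp)
  have ig3 : Integrable (fun ω =>
      S ω * ptil ω * (1 - ptil ω) / (1 - phat ω) * (μ0 ω * (1 - (P[A|m𝓗]) ω))) P :=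
    DRHelper.integrable_of_ae_bound
      (mB3.mul (mμ0.mul (measurable_const.sub mp))).aestronglyMeasurable
      (DRHelper.aeb_mul bB3 (DRHelper.aeb_mul bμ0 b1p))
  have ig4 : Integrable (fun ω =>
      S ω * ptil ω * (1 - ptil ω) * μhat0 ω / (1 - phat ω) * (1 - (P[A|m𝓗]) ω)) P :=
    DRHelper.integrable_of_ae_bound (mB4.mul (measurable_const.sub mp)).aestronglyMeasurable
      (DRHelper.aeb_mul bB4 b1p)
  -- the model term and the target integrand
  have bq : ∀ᵐ ω ∂P, |((P[A|m𝓗]) ω - phat ω) / (phat ω * (1 - phat ω))| ≤ 2 / (ε * ε) := by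
    filter_upwards [hp, hphat] with ω h1 h2
    rw [abs_div]
    refine div_le_div₀ (by norm_num) ?_ (by positivity) ?_
    · exact abs_le.2 ⟨by linarith [h1.1, h1.2, h2.1, h2.2], by linarith [h1.1, h1.2, h2.1, h2.2]⟩
    · have hpos : 0 < phat ω * (1 - phat ω) := by nlinarith [h2.1, h2.2]
      rw [abs_of_pos hpos]
      nlinarith [h2.1, h2.2]
  have iG : Integrable (fun ω => S ω * ptil ω * (1 - ptil ω)
      * (((P[A|m𝓗]) ω - phat ω) / (phat ω * (1 - phat ω)))
      * ((1 - phat ω) * Real.exp (-c ω) * (μ1 ω - μhat1 ω)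
        + phat ω * (μ0 ω - μhat0 ω))) P :=
    DRHelper.integrable_of_ae_bound
      ((mT.mul ((mp.sub mphat).div (mphat.mul (measurable_const.sub mphat)))).mul
        ((((measurable_const.sub mphat).mul mexp).mul (mμ1.sub mμh1)).add
          (mphat.mul (mμ0.sub mμh0)))).aestronglyMeasurable
      (DRHelper.aeb_mul (DRHelper.aeb_mul bT bq)
        (DRHelper.aeb_add (DRHelper.aeb_mul (DRHelper.aeb_mul b1ph bexp)
          (DRHelper.aeb_sub bμ1 hμhat1b))
          (DRHelper.aeb_mul bph (DRHelper.aeb_sub bμ0 hμhat0b))))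
  have iZ : Integrable (fun ω => Real.exp (-c ω) * μ1 ω - μ0 ω) P :=
    DRHelper.integrable_of_ae_bound ((mexp.mul mμ1).sub mμ0).aestronglyMeasurable
      (DRHelper.aeb_sub (DRHelper.aeb_mul bexp bμ1) bμ0)
  have iTZ : Integrable (fun ω =>
      S ω * ptil ω * (1 - ptil ω) * (Real.exp (-c ω) * μ1 ω - μ0 ω)) P :=
    DRHelper.integrable_of_ae_bound (mT.mul ((mexp.mul mμ1).sub mμ0)).aestronglyMeasurable
      (DRHelper.aeb_mul bT (DRHelper.aeb_sub (DRHelper.aeb_mul bexp bμ1) bμ0))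
  have hTZ0 : ∫ ω, S ω * ptil ω * (1 - ptil ω) * (Real.exp (-c ω) * μ1 ω - μ0 ω) ∂P = 0 := by
    rw [DRHelper.integral_mul_condexp (h𝓢.trans h𝓗)
      (B := fun ω => S ω * ptil ω * (1 - ptil ω))
      (((hS.mul hptilmeas).mul (measurable_const.sub hptilmeas)).stronglyMeasurable) iTZ iZ]
    calc ∫ ω, S ω * ptil ω * (1 - ptil ω)
          * (P[(fun ω => Real.exp (-c ω) * μ1 ω - μ0 ω)|m𝓢]) ω ∂P
        = ∫ ω, (0:ℝ) ∂P := integral_congr_ae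
          (by filter_upwards [hmodel] with ω hω; rw [hω]; simp)
      _ = 0 := by simp
  -- main computation
  calc ∫ ω, mD ω ∂P
      = ∫ ω, (S ω * ptil ω * (1 - ptil ω) * Real.exp (-c ω) / phat ω * (Y ω * A ω)
          - S ω * ptil ω * (1 - ptil ω) * Real.exp (-c ω) * μhat1 ω / phat ω * A ω
          - S ω * ptil ω * (1 - ptil ω) / (1 - phat ω) * (Y ω * (1 - A ω))
          + S ω * ptil ω * (1 - ptil ω) * μhat0 ω / (1 - phat ω) * (1 - A ω)
          + S ω * ptil ω * (1 - ptil ω) * (μhat1 ω * Real.exp (-c ω) - μhat0 ω)) ∂P :=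
        integral_congr_ae hmDf
    _ = (∫ ω, S ω * ptil ω * (1 - ptil ω) * Real.exp (-c ω) / phat ω * (Y ω * A ω) ∂P)
          - (∫ ω, S ω * ptil ω * (1 - ptil ω) * Real.exp (-c ω) * μhat1 ω / phat ω * A ω ∂P)
          - (∫ ω, S ω * ptil ω * (1 - ptil ω) / (1 - phat ω) * (Y ω * (1 - A ω)) ∂P)
          + (∫ ω, S ω * ptil ω * (1 - ptil ω) * μhat0 ω / (1 - phat ω) * (1 - A ω) ∂P)
          + ∫ ω, S ω * ptil ω * (1 - ptil ω) * (μhat1 ω * Real.exp (-c ω) - μhat0 ω) ∂P :=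
        DRHelper.integral_comb5 if1 if2 if3 if4 if5
    _ = (∫ ω, S ω * ptil ω * (1 - ptil ω) * Real.exp (-c ω) / phat ω
            * (μ1 ω * (P[A|m𝓗]) ω) ∂P)
          - (∫ ω, S ω * ptil ω * (1 - ptil ω) * Real.exp (-c ω) * μhat1 ω / phat ω
            * (P[A|m𝓗]) ω ∂P)
          - (∫ ω, S ω * ptil ω * (1 - ptil ω) / (1 - phat ω)
            * (μ0 ω * (1 - (P[A|m𝓗]) ω)) ∂P)
          + (∫ ω, S ω * ptil ω * (1 - ptil ω) * μhat0 ω / (1 - phat ω)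
            * (1 - (P[A|m𝓗]) ω) ∂P)
          + ∫ ω, S ω * ptil ω * (1 - ptil ω) * (μhat1 ω * Real.exp (-c ω) - μhat0 ω) ∂P := by
        rw [pull1, pull2, pull3, pull4]
    _ = ∫ ω, (S ω * ptil ω * (1 - ptil ω) * Real.exp (-c ω) / phat ω * (μ1 ω * (P[A|m𝓗]) ω)
          - S ω * ptil ω * (1 - ptil ω) * Real.exp (-c ω) * μhat1 ω / phat ω * (P[A|m𝓗]) ω
          - S ω * ptil ω * (1 - ptil ω) / (1 - phat ω) * (μ0 ω * (1 - (P[A|m𝓗]) ω))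
          + S ω * ptil ω * (1 - ptil ω) * μhat0 ω / (1 - phat ω) * (1 - (P[A|m𝓗]) ω)
          + S ω * ptil ω * (1 - ptil ω) * (μhat1 ω * Real.exp (-c ω) - μhat0 ω)) ∂P :=
        (DRHelper.integral_comb5 ig1 ig2 ig3 ig4 if5).symm
    _ = ∫ ω, (S ω * ptil ω * (1 - ptil ω)
          * (((P[A|m𝓗]) ω - phat ω) / (phat ω * (1 - phat ω)))
          * ((1 - phat ω) * Real.exp (-c ω) * (μ1 ω - μhat1 ω)
            + phat ω * (μ0 ω - μhat0 ω))
          + S ω * ptil ω * (1 - ptil ω) * (Real.exp (-c ω) * μ1 ω - μ0 ω)) ∂P := by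
        refine integral_congr_ae ?_
        filter_upwards [hp, hphat] with ω h1 h2
        have hph0 : phat ω ≠ 0 := (lt_of_lt_of_le hε0 h2.1).ne'
        have hph1 : (1 : ℝ) - phat ω ≠ 0 := (by linarith [h2.2] : (0:ℝ) < 1 - phat ω).ne'
        field_simp
        ring
    _ = (∫ ω, S ω * ptil ω * (1 - ptil ω)
          * (((P[A|m𝓗]) ω - phat ω) / (phat ω * (1 - phat ω)))
          * ((1 - phat ω) * Real.exp (-c ω) * (μ1 ω - μhat1 ω)
            + phat ω * (μ0 ω - μhat0 ω)) ∂P)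
          + ∫ ω, S ω * ptil ω * (1 - ptil ω) * (Real.exp (-c ω) * μ1 ω - μ0 ω) ∂P :=
        integral_add iG iTZ
    _ = ∫ ω, S ω * ptil ω * (1 - ptil ω)
          * (((P[A|m𝓗]) ω - phat ω) / (phat ω * (1 - phat ω)))
          * ((1 - phat ω) * Real.exp (-c ω) * (μ1 ω - μhat1 ω)
            + phat ω * (μ0 ω - μhat0 ω)) ∂P := by
        rw [hTZ0, add_zero]
end

section
/- If p̂ = p almost surely, or if μ̂1 = μ1 and μ̂0 = μ0 almost surely, then E[m_D] = 0. That is, under the marginal excursion-effect model, the doubly robust estimating-function term m_D is exactly unbiased whenever either the working randomization probability or the working outcome models are correctly specified. -/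
open MeasureTheory

section DRAux
variable {Ω : Type*} {mΩ : MeasurableSpace Ω} {P : Measure Ω}

lemma DR_integrable_of_bdd [IsFiniteMeasure P] {f : Ω → ℝ} (hf : AEStronglyMeasurable f P)
    {C : ℝ} (hb : ∀ᵐ ω ∂P, |f ω| ≤ C) : Integrable f P :=
  (integrable_const C).mono' hf (hb.mono fun ω h => by simpa using h)

lemma DR_abs_mul_le {a b A B : ℝ} (ha : |a| ≤ A) (hb : |b| ≤ B) : |a * b| ≤ A * B := by
  rw [abs_mul]
  exact mul_le_mul ha hb (abs_nonneg _) ((abs_nonneg a).trans ha)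

lemma DR_pull [IsProbabilityMeasure P] {m : MeasurableSpace Ω} (hm : m ≤ mΩ)
    {H f : Ω → ℝ} (hH : StronglyMeasurable[m] H) (hf : Integrable f P)
    (hHf : Integrable (fun ω => H ω * f ω) P) :
    ∫ ω, H ω * f ω ∂P = ∫ ω, H ω * (P[f|m]) ω ∂P := by
  have h1 : P[fun ω => H ω * f ω|m] =ᵐ[P] fun ω => H ω * (P[f|m]) ω :=
    condExp_mul_of_stronglyMeasurable_left hH hHf hf
  calc ∫ ω, H ω * f ω ∂P = ∫ ω, (P[fun ω => H ω * f ω|m]) ω ∂P := (integral_condExp hm).symm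
    _ = ∫ ω, H ω * (P[f|m]) ω ∂P := integral_congr_ae h1

end DRAux

/-- Under the marginal excursion-effect model, if `p̂ = p` a.s., or if
`μ̂1 = μ1` and `μ̂0 = μ0` a.s., then `E[m_D] = 0` (exact double robustness). -/
theorem doubly_robust_estimating_function_unbiased
    {Ω : Type*} {m𝓗 : MeasurableSpace Ω} {m𝓢 : MeasurableSpace Ω} {mΩ : MeasurableSpace Ω} {P : Measure Ω} [IsProbabilityMeasure P]
    (h𝓗 : m𝓗 ≤ mΩ)
    {A : Ω → ℝ} (hA : Measurable A)
    (hA01 : ∀ᵐ ω ∂P, A ω = 0 ∨ A ω = 1)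
    {ε : ℝ} (hε0 : 0 < ε) (hε2 : ε < 1 / 2)
    (hp : ∀ᵐ ω ∂P, ε ≤ (P[A | m𝓗]) ω ∧ (P[A | m𝓗]) ω ≤ 1 - ε)
    {Y : Ω → ℝ} (hY : Measurable Y) {CY : ℝ} (hYb : ∀ᵐ ω ∂P, |Y ω| ≤ CY)
    {μ1 μ0 : Ω → ℝ} (hμ1 : Measurable[m𝓗] μ1) (hμ0 : Measurable[m𝓗] μ0)
    (hμ1p : (fun ω => μ1 ω * (P[A | m𝓗]) ω) =ᵐ[P] P[(fun ω => Y ω * A ω) | m𝓗])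
    (hμ0p : (fun ω => μ0 ω * (1 - (P[A | m𝓗]) ω)) =ᵐ[P]
      P[(fun ω => Y ω * (1 - A ω)) | m𝓗])
    {ptil phat : Ω → ℝ}
    (hptilmeas𝓗 : Measurable[m𝓗] ptil) (hphatmeas : Measurable[m𝓗] phat)
    (hptil : ∀ᵐ ω ∂P, ε ≤ ptil ω ∧ ptil ω ≤ 1 - ε)
    (hphat : ∀ᵐ ω ∂P, ε ≤ phat ω ∧ phat ω ≤ 1 - ε)
    {What : Ω → ℝ}
    (hWhat : What = fun ω => (ptil ω / phat ω) ^ (A ω)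
      * ((1 - ptil ω) / (1 - phat ω)) ^ (1 - A ω))
    (h𝓢 : m𝓢 ≤ m𝓗)
    {c S : Ω → ℝ} (hc : Measurable[m𝓢] c) {Cc : ℝ} (hcb : ∀ᵐ ω ∂P, |c ω| ≤ Cc)
    (hS : Measurable[m𝓢] S) {CS : ℝ} (hSb : ∀ᵐ ω ∂P, |S ω| ≤ CS)
    (hptilmeas : Measurable[m𝓢] ptil)
    (hmodel : P[(fun ω => Real.exp (-c ω) * μ1 ω - μ0 ω) | m𝓢] =ᵐ[P] (fun _ => (0 : ℝ)))
    {μhat1 μhat0 : Ω → ℝ}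
    (hμhat1 : Measurable[m𝓗] μhat1) {C1 : ℝ} (hμhat1b : ∀ᵐ ω ∂P, |μhat1 ω| ≤ C1)
    (hμhat0 : Measurable[m𝓗] μhat0) {C0 : ℝ} (hμhat0b : ∀ᵐ ω ∂P, |μhat0 ω| ≤ C0)
    {mD : Ω → ℝ}
    (hmD : mD = fun ω =>
      S ω * What ω * (Y ω - (A ω * μhat1 ω + (1 - A ω) * μhat0 ω))
          * Real.exp (-(c ω * A ω)) * (A ω - ptil ω)
        + S ω * ptil ω * (1 - ptil ω) * (μhat1 ω * Real.exp (-c ω) - μhat0 ω))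
    (hcorrect : (phat =ᵐ[P] P[A | m𝓗]) ∨ ((μhat1 =ᵐ[P] μ1) ∧ (μhat0 =ᵐ[P] μ0))) :
    ∫ ω, mD ω ∂P = 0
    := by
  subst hmD hWhat
  haveI : (MeasureTheory.ae P).NeBot := MeasureTheory.ae_neBot.mpr (IsProbabilityMeasure.ne_zero P)
  -- nonnegativity of the bounds
  have hCY0 : 0 ≤ CY := by obtain ⟨ω, hω⟩ := hYb.exists; exact (abs_nonneg _).trans hω
  have hCS0 : 0 ≤ CS := by obtain ⟨ω, hω⟩ := hSb.exists; exact (abs_nonneg _).trans hω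
  have hCc0 : 0 ≤ Cc := by obtain ⟨ω, hω⟩ := hcb.exists; exact (abs_nonneg _).trans hω
  have mA : Measurable[mΩ] A := hA
  have mY : Measurable[mΩ] Y := hY
  have mS : Measurable[mΩ] S := hS.mono (h𝓢.trans h𝓗) le_rfl
  have mc : Measurable[mΩ] c := hc.mono (h𝓢.trans h𝓗) le_rfl
  have mpt : Measurable[mΩ] ptil := hptilmeas𝓗.mono h𝓗 le_rfl
  have mph : Measurable[mΩ] phat := hphatmeas.mono h𝓗 le_rfl
  have mm1 : Measurable[mΩ] μhat1 := hμhat1.mono h𝓗 le_rfl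
  have mm0 : Measurable[mΩ] μhat0 := hμhat0.mono h𝓗 le_rfl
  have mu1 : Measurable[mΩ] μ1 := hμ1.mono h𝓗 le_rfl
  have mu0 : Measurable[mΩ] μ0 := hμ0.mono h𝓗 le_rfl
  have mE : Measurable[mΩ] (fun ω => Real.exp (-c ω)) := mc.neg.exp
  -- a.e. bounds on μ1 and μ0
  have hA1 : ∀ᵐ ω ∂P, |A ω| ≤ 1 := by
    filter_upwards [hA01] with ω h; rcases h with h | h <;> simp [h]
  have hYA : ∀ᵐ ω ∂P, |Y ω * A ω| ≤ CY * 1 := by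
    filter_upwards [hYb, hA1] with ω h1 h2; exact DR_abs_mul_le h1 h2
  have h1A : ∀ᵐ ω ∂P, |1 - A ω| ≤ 1 := by
    filter_upwards [hA01] with ω h; rcases h with h | h <;> simp [h]
  have hY1A : ∀ᵐ ω ∂P, |Y ω * (1 - A ω)| ≤ CY * 1 := by
    filter_upwards [hYb, h1A] with ω h1 h2; exact DR_abs_mul_le h1 h2
  have hcYA : ∀ᵐ ω ∂P, |(P[(fun ω => Y ω * A ω) | m𝓗]) ω| ≤ CY := by
    have := ae_bdd_condExp_of_ae_bdd (m := m𝓗) (μ := P)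
      (R := ⟨CY, hCY0⟩) (f := fun ω => Y ω * A ω) (hYA.mono fun ω h => by rw [mul_one] at h; exact h)
    exact this.mono fun ω h => h
  have hcY1A : ∀ᵐ ω ∂P, |(P[(fun ω => Y ω * (1 - A ω)) | m𝓗]) ω| ≤ CY := by
    have := ae_bdd_condExp_of_ae_bdd (m := m𝓗) (μ := P)
      (R := ⟨CY, hCY0⟩) (f := fun ω => Y ω * (1 - A ω)) (hY1A.mono fun ω h => by rw [mul_one] at h; exact h)
    exact this.mono fun ω h => h
  have hμ1b : ∀ᵐ ω ∂P, |μ1 ω| ≤ CY / ε := by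
    filter_upwards [hμ1p, hcYA, hp] with ω he hb hq
    rw [le_div_iff₀ hε0]
    calc |μ1 ω| * ε ≤ |μ1 ω| * (P[A|m𝓗]) ω :=
          mul_le_mul_of_nonneg_left hq.1 (abs_nonneg _)
      _ = |μ1 ω * (P[A|m𝓗]) ω| := by
          rw [abs_mul, abs_of_nonneg (le_trans hε0.le hq.1)]
      _ ≤ CY := by rw [he]; exact hb
  have hμ0b : ∀ᵐ ω ∂P, |μ0 ω| ≤ CY / ε := by
    filter_upwards [hμ0p, hcY1A, hp] with ω he hb hq
    rw [le_div_iff₀ hε0]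
    calc |μ0 ω| * ε ≤ |μ0 ω| * (1 - (P[A|m𝓗]) ω) :=
          mul_le_mul_of_nonneg_left (by linarith [hq.2]) (abs_nonneg _)
      _ = |μ0 ω * (1 - (P[A|m𝓗]) ω)| := by
          rw [abs_mul, abs_of_nonneg (by linarith [hq.2] : (0:ℝ) ≤ 1 - (P[A|m𝓗]) ω)]
      _ ≤ CY := by rw [he]; exact hb
  -- pointwise bound facts
  have hfacts : ∀ᵐ ω ∂P, |S ω| ≤ CS ∧ |ptil ω / phat ω| ≤ 1 / ε ∧ |1 - ptil ω| ≤ 1 ∧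
      |ptil ω| ≤ 1 ∧ |Real.exp (-c ω)| ≤ Real.exp Cc ∧ |A ω| ≤ 1 ∧ |1 - A ω| ≤ 1 ∧
      |Y ω| ≤ CY ∧ |μhat1 ω| ≤ C1 ∧ |μhat0 ω| ≤ C0 ∧ |μ1 ω| ≤ CY / ε ∧ |μ0 ω| ≤ CY / ε ∧
      |1 / (1 - phat ω)| ≤ 1 / ε := by
    filter_upwards [hSb, hptil, hphat, hcb, hA1, h1A, hYb, hμhat1b, hμhat0b, hμ1b, hμ0b]
      with ω h1 h2 h3 h4 h5 h6 h7 h8 h9 h10 h11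
    have hph0 : 0 < phat ω := lt_of_lt_of_le hε0 h3.1
    have hph1 : 0 < 1 - phat ω := by linarith [h3.2]
    refine ⟨h1, ?_, ?_, ?_, ?_, h5, h6, h7, h8, h9, h10, h11, ?_⟩
    · rw [abs_div, abs_of_nonneg (le_trans hε0.le h2.1), abs_of_pos hph0]
      exact div_le_div₀ zero_le_one (by linarith [h2.2]) hε0 h3.1
    · rw [abs_le]; constructor <;> linarith [h2.1, h2.2]
    · rw [abs_le]; constructor <;> linarith [h2.1, h2.2]
    · rw [abs_of_pos (Real.exp_pos _)]
      exact Real.exp_le_exp.2 (by rcases abs_le.1 h4 with ⟨hl, hr⟩; linarith)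
    · rw [abs_of_pos (by positivity)]
      rw [div_le_div_iff₀ hph1 hε0]
      linarith [h3.2]
  -- integrability of all pieces
  have intA : Integrable A P := DR_integrable_of_bdd mA.aestronglyMeasurable hA1
  have intYA : Integrable (fun ω => Y ω * A ω) P :=
    DR_integrable_of_bdd (mY.mul mA).aestronglyMeasurable hYA
  have int1A : Integrable (fun ω => 1 - A ω) P :=
    DR_integrable_of_bdd (measurable_const.sub mA).aestronglyMeasurable h1A
  have intY1A : Integrable (fun ω => Y ω * (1 - A ω)) P :=
    DR_integrable_of_bdd (mY.mul (measurable_const.sub mA)).aestronglyMeasurable hY1A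
  have mH1 : Measurable[mΩ] (fun ω => S ω * (ptil ω / phat ω) * Real.exp (-c ω) * (1 - ptil ω)) :=
    ((mS.mul (mpt.div mph)).mul mE).mul (measurable_const.sub mpt)
  have mH3 : Measurable[mΩ] (fun ω => -(S ω * ptil ω * (1 - ptil ω) / (1 - phat ω))) :=
    (((mS.mul mpt).mul (measurable_const.sub mpt)).div (measurable_const.sub mph)).neg
  have mh0 : Measurable[mΩ] (fun ω => S ω * ptil ω * (1 - ptil ω)) :=
    (mS.mul mpt).mul (measurable_const.sub mpt)
  have i1 : Integrable (fun ω =>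
      (S ω * (ptil ω / phat ω) * Real.exp (-c ω) * (1 - ptil ω)) * (Y ω * A ω)) P := by
    refine DR_integrable_of_bdd (mH1.mul (mY.mul mA)).aestronglyMeasurable
      (C := CS * (1/ε) * Real.exp Cc * 1 * (CY * 1)) ?_
    filter_upwards [hfacts] with ω ⟨a1, a2, a3, a4, a5, a6, a7, a8, a9, a10, a11, a12, a13⟩
    exact DR_abs_mul_le (DR_abs_mul_le (DR_abs_mul_le (DR_abs_mul_le a1 a2) a5) a3)
      (DR_abs_mul_le a8 a6)
  have i2 : Integrable (fun ω =>
      (S ω * (ptil ω / phat ω) * Real.exp (-c ω) * (1 - ptil ω) * μhat1 ω) * A ω) P := by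
    refine DR_integrable_of_bdd ((mH1.mul mm1).mul mA).aestronglyMeasurable
      (C := CS * (1/ε) * Real.exp Cc * 1 * C1 * 1) ?_
    filter_upwards [hfacts] with ω ⟨a1, a2, a3, a4, a5, a6, a7, a8, a9, a10, a11, a12, a13⟩
    exact DR_abs_mul_le (DR_abs_mul_le (DR_abs_mul_le (DR_abs_mul_le (DR_abs_mul_le a1 a2) a5) a3) a9) a6
  have i3 : Integrable (fun ω =>
      (-(S ω * ptil ω * (1 - ptil ω) / (1 - phat ω))) * (Y ω * (1 - A ω))) P := by
    refine DR_integrable_of_bdd (mH3.mul (mY.mul (measurable_const.sub mA))).aestronglyMeasurable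
      (C := CS * 1 * 1 * (1/ε) * (CY * 1)) ?_
    filter_upwards [hfacts] with ω ⟨a1, a2, a3, a4, a5, a6, a7, a8, a9, a10, a11, a12, a13⟩
    have : |(-(S ω * ptil ω * (1 - ptil ω) / (1 - phat ω)))| ≤ CS * 1 * 1 * (1/ε) := by
      rw [abs_neg, div_eq_mul_one_div]
      exact DR_abs_mul_le (DR_abs_mul_le (DR_abs_mul_le a1 a4) a3) a13
    exact DR_abs_mul_le this (DR_abs_mul_le a8 a7)
  have i4 : Integrable (fun ω =>
      (-(S ω * ptil ω * (1 - ptil ω) / (1 - phat ω)) * μhat0 ω) * (1 - A ω)) P := by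
    refine DR_integrable_of_bdd ((mH3.mul mm0).mul (measurable_const.sub mA)).aestronglyMeasurable
      (C := CS * 1 * 1 * (1/ε) * C0 * 1) ?_
    filter_upwards [hfacts] with ω ⟨a1, a2, a3, a4, a5, a6, a7, a8, a9, a10, a11, a12, a13⟩
    have : |(-(S ω * ptil ω * (1 - ptil ω) / (1 - phat ω)))| ≤ CS * 1 * 1 * (1/ε) := by
      rw [abs_neg, div_eq_mul_one_div]
      exact DR_abs_mul_le (DR_abs_mul_le (DR_abs_mul_le a1 a4) a3) a13
    exact DR_abs_mul_le (DR_abs_mul_le this a10) a7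
  have i5 : Integrable (fun ω =>
      S ω * ptil ω * (1 - ptil ω) * (μhat1 ω * Real.exp (-c ω) - μhat0 ω)) P := by
    refine DR_integrable_of_bdd
      (mh0.mul ((mm1.mul mE).sub mm0)).aestronglyMeasurable
      (C := CS * 1 * 1 * (C1 * Real.exp Cc + C0)) ?_
    filter_upwards [hfacts] with ω ⟨a1, a2, a3, a4, a5, a6, a7, a8, a9, a10, a11, a12, a13⟩
    refine DR_abs_mul_le (DR_abs_mul_le (DR_abs_mul_le a1 a4) a3) ?_
    exact (abs_sub _ _).trans (add_le_add (DR_abs_mul_le a9 a5) a10)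
  have i2' : Integrable (fun ω =>
      S ω * ptil ω * (1 - ptil ω) * (μhat1 ω * Real.exp (-c ω))) P := by
    refine DR_integrable_of_bdd (mh0.mul (mm1.mul mE)).aestronglyMeasurable
      (C := CS * 1 * 1 * (C1 * Real.exp Cc)) ?_
    filter_upwards [hfacts] with ω ⟨a1, a2, a3, a4, a5, a6, a7, a8, a9, a10, a11, a12, a13⟩
    exact DR_abs_mul_le (DR_abs_mul_le (DR_abs_mul_le a1 a4) a3) (DR_abs_mul_le a9 a5)
  have i4' : Integrable (fun ω => S ω * ptil ω * (1 - ptil ω) * μhat0 ω) P := by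
    refine DR_integrable_of_bdd (mh0.mul mm0).aestronglyMeasurable
      (C := CS * 1 * 1 * C0) ?_
    filter_upwards [hfacts] with ω ⟨a1, a2, a3, a4, a5, a6, a7, a8, a9, a10, a11, a12, a13⟩
    exact DR_abs_mul_le (DR_abs_mul_le (DR_abs_mul_le a1 a4) a3) a10
  have ih0e1 : Integrable (fun ω =>
      S ω * ptil ω * (1 - ptil ω) * (Real.exp (-c ω) * μ1 ω)) P := by
    refine DR_integrable_of_bdd (mh0.mul (mE.mul mu1)).aestronglyMeasurable
      (C := CS * 1 * 1 * (Real.exp Cc * (CY / ε))) ?_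
    filter_upwards [hfacts] with ω ⟨a1, a2, a3, a4, a5, a6, a7, a8, a9, a10, a11, a12, a13⟩
    exact DR_abs_mul_le (DR_abs_mul_le (DR_abs_mul_le a1 a4) a3) (DR_abs_mul_le a5 a11)
  have ih0μ0 : Integrable (fun ω => S ω * ptil ω * (1 - ptil ω) * μ0 ω) P := by
    refine DR_integrable_of_bdd (mh0.mul mu0).aestronglyMeasurable
      (C := CS * 1 * 1 * (CY / ε)) ?_
    filter_upwards [hfacts] with ω ⟨a1, a2, a3, a4, a5, a6, a7, a8, a9, a10, a11, a12, a13⟩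
    exact DR_abs_mul_le (DR_abs_mul_le (DR_abs_mul_le a1 a4) a3) a12
  have intf5 : Integrable (fun ω => Real.exp (-c ω) * μ1 ω - μ0 ω) P := by
    refine DR_integrable_of_bdd ((mE.mul mu1).sub mu0).aestronglyMeasurable
      (C := Real.exp Cc * (CY / ε) + CY / ε) ?_
    filter_upwards [hfacts] with ω ⟨a1, a2, a3, a4, a5, a6, a7, a8, a9, a10, a11, a12, a13⟩
    exact (abs_sub _ _).trans (add_le_add (DR_abs_mul_le a5 a11) a12)
  have inth0f5 : Integrable (fun ω =>
      (S ω * ptil ω * (1 - ptil ω)) * (Real.exp (-c ω) * μ1 ω - μ0 ω)) P := by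
    refine DR_integrable_of_bdd (mh0.mul ((mE.mul mu1).sub mu0)).aestronglyMeasurable
      (C := CS * 1 * 1 * (Real.exp Cc * (CY / ε) + CY / ε)) ?_
    filter_upwards [hfacts] with ω ⟨a1, a2, a3, a4, a5, a6, a7, a8, a9, a10, a11, a12, a13⟩
    exact DR_abs_mul_le (DR_abs_mul_le (DR_abs_mul_le a1 a4) a3)
      ((abs_sub _ _).trans (add_le_add (DR_abs_mul_le a5 a11) a12))
  -- step 1: rewrite mD using A ∈ {0,1}
  have hstep1 : ∫ ω, (S ω * ((ptil ω / phat ω) ^ (A ω)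
        * ((1 - ptil ω) / (1 - phat ω)) ^ (1 - A ω))
        * (Y ω - (A ω * μhat1 ω + (1 - A ω) * μhat0 ω))
        * Real.exp (-(c ω * A ω)) * (A ω - ptil ω)
      + S ω * ptil ω * (1 - ptil ω) * (μhat1 ω * Real.exp (-c ω) - μhat0 ω)) ∂P
      = ∫ ω, ((S ω * (ptil ω / phat ω) * Real.exp (-c ω) * (1 - ptil ω)) * (Y ω * A ω)
        - (S ω * (ptil ω / phat ω) * Real.exp (-c ω) * (1 - ptil ω) * μhat1 ω) * A ω
        + ((-(S ω * ptil ω * (1 - ptil ω) / (1 - phat ω))) * (Y ω * (1 - A ω))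
          - (-(S ω * ptil ω * (1 - ptil ω) / (1 - phat ω)) * μhat0 ω) * (1 - A ω))
        + S ω * ptil ω * (1 - ptil ω) * (μhat1 ω * Real.exp (-c ω) - μhat0 ω)) ∂P := by
    apply integral_congr_ae
    filter_upwards [hA01] with ω hω
    rcases hω with h | h <;>
      simp only [h, Real.rpow_one, Real.rpow_zero, sub_zero, sub_self, mul_one, mul_zero,
        zero_mul, one_mul, neg_zero, Real.exp_zero, zero_add, add_zero, zero_sub] <;>
      ring
  -- strongly measurable multipliers
  have sH1 : StronglyMeasurable[m𝓗] (fun ω =>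
      S ω * (ptil ω / phat ω) * Real.exp (-c ω) * (1 - ptil ω)) :=
    ((((hS.mono h𝓢 le_rfl).mul (hptilmeas𝓗.div hphatmeas)).mul
      ((hc.mono h𝓢 le_rfl).neg.exp)).mul (measurable_const.sub hptilmeas𝓗)).stronglyMeasurable
  have sH1m : StronglyMeasurable[m𝓗] (fun ω =>
      S ω * (ptil ω / phat ω) * Real.exp (-c ω) * (1 - ptil ω) * μhat1 ω) :=
    (((((hS.mono h𝓢 le_rfl).mul (hptilmeas𝓗.div hphatmeas)).mul
      ((hc.mono h𝓢 le_rfl).neg.exp)).mul (measurable_const.sub hptilmeas𝓗)).mul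
      hμhat1).stronglyMeasurable
  have sH3 : StronglyMeasurable[m𝓗] (fun ω =>
      -(S ω * ptil ω * (1 - ptil ω) / (1 - phat ω))) :=
    ((((hS.mono h𝓢 le_rfl).mul hptilmeas𝓗).mul (measurable_const.sub hptilmeas𝓗)).div
      (measurable_const.sub hphatmeas)).neg.stronglyMeasurable
  have sH3m : StronglyMeasurable[m𝓗] (fun ω =>
      -(S ω * ptil ω * (1 - ptil ω) / (1 - phat ω)) * μhat0 ω) :=
    (((((hS.mono h𝓢 le_rfl).mul hptilmeas𝓗).mul (measurable_const.sub hptilmeas𝓗)).div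
      (measurable_const.sub hphatmeas)).neg.mul hμhat0).stronglyMeasurable
  have sh0S : StronglyMeasurable[m𝓢] (fun ω => S ω * ptil ω * (1 - ptil ω)) :=
    ((hS.mul hptilmeas).mul (measurable_const.sub hptilmeas)).stronglyMeasurable
  -- conditional expectation of 1 - A
  have h1Acond : (P[(fun ω => 1 - A ω)|m𝓗]) =ᵐ[P] fun ω => 1 - (P[A|m𝓗]) ω := by
    have h := condExp_sub (m := m𝓗) (μ := P) (f := fun _ => (1:ℝ)) (g := A)
      (integrable_const 1) intA
    refine h.trans ?_
    rw [condExp_const h𝓗]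
    exact Filter.Eventually.of_forall fun ω => rfl
  -- the key vanishing integral from the model assumption
  have hg0 : ∫ ω, (S ω * ptil ω * (1 - ptil ω)) * (Real.exp (-c ω) * μ1 ω - μ0 ω) ∂P = 0 := by
    rw [DR_pull (h𝓢.trans h𝓗) sh0S intf5 inth0f5]
    have : ∫ ω, (S ω * ptil ω * (1 - ptil ω))
        * ((P[(fun ω => Real.exp (-c ω) * μ1 ω - μ0 ω)|m𝓢]) ω) ∂P = ∫ _ω, (0:ℝ) ∂P :=
      integral_congr_ae (by filter_upwards [hmodel] with ω h; rw [h, mul_zero])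
    rw [this, integral_zero]
  -- pull out the conditional expectations
  have e1 : ∫ ω, (S ω * (ptil ω / phat ω) * Real.exp (-c ω) * (1 - ptil ω)) * (Y ω * A ω) ∂P
      = ∫ ω, (S ω * (ptil ω / phat ω) * Real.exp (-c ω) * (1 - ptil ω))
          * (μ1 ω * (P[A|m𝓗]) ω) ∂P := by
    refine (DR_pull h𝓗 sH1 intYA i1).trans (integral_congr_ae ?_)
    filter_upwards [hμ1p] with ω h
    rw [← h]
  have e2 : ∫ ω, (S ω * (ptil ω / phat ω) * Real.exp (-c ω) * (1 - ptil ω) * μhat1 ω) * A ω ∂P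
      = ∫ ω, (S ω * (ptil ω / phat ω) * Real.exp (-c ω) * (1 - ptil ω) * μhat1 ω)
          * (P[A|m𝓗]) ω ∂P := DR_pull h𝓗 sH1m intA i2
  have e3 : ∫ ω, (-(S ω * ptil ω * (1 - ptil ω) / (1 - phat ω))) * (Y ω * (1 - A ω)) ∂P
      = ∫ ω, (-(S ω * ptil ω * (1 - ptil ω) / (1 - phat ω)))
          * (μ0 ω * (1 - (P[A|m𝓗]) ω)) ∂P := by
    refine (DR_pull h𝓗 sH3 intY1A i3).trans (integral_congr_ae ?_)
    filter_upwards [hμ0p] with ω h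
    rw [← h]
  have e4 : ∫ ω, (-(S ω * ptil ω * (1 - ptil ω) / (1 - phat ω)) * μhat0 ω) * (1 - A ω) ∂P
      = ∫ ω, (-(S ω * ptil ω * (1 - ptil ω) / (1 - phat ω)) * μhat0 ω)
          * (1 - (P[A|m𝓗]) ω) ∂P := by
    refine (DR_pull h𝓗 sH3m int1A i4).trans (integral_congr_ae ?_)
    filter_upwards [h1Acond] with ω h
    rw [h]
  -- split the integral
  have hsplit : ∫ ω, ((S ω * (ptil ω / phat ω) * Real.exp (-c ω) * (1 - ptil ω)) * (Y ω * A ω)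
        - (S ω * (ptil ω / phat ω) * Real.exp (-c ω) * (1 - ptil ω) * μhat1 ω) * A ω
        + ((-(S ω * ptil ω * (1 - ptil ω) / (1 - phat ω))) * (Y ω * (1 - A ω))
          - (-(S ω * ptil ω * (1 - ptil ω) / (1 - phat ω)) * μhat0 ω) * (1 - A ω))
        + S ω * ptil ω * (1 - ptil ω) * (μhat1 ω * Real.exp (-c ω) - μhat0 ω)) ∂P
      = ((∫ ω, (S ω * (ptil ω / phat ω) * Real.exp (-c ω) * (1 - ptil ω)) * (Y ω * A ω) ∂P)
        - (∫ ω, (S ω * (ptil ω / phat ω) * Real.exp (-c ω) * (1 - ptil ω) * μhat1 ω) * A ω ∂P)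
        + ((∫ ω, (-(S ω * ptil ω * (1 - ptil ω) / (1 - phat ω))) * (Y ω * (1 - A ω)) ∂P)
          - ∫ ω, (-(S ω * ptil ω * (1 - ptil ω) / (1 - phat ω)) * μhat0 ω) * (1 - A ω) ∂P))
        + ∫ ω, S ω * ptil ω * (1 - ptil ω) * (μhat1 ω * Real.exp (-c ω) - μhat0 ω) ∂P := by
    have A1 : ∫ ω, ((S ω * (ptil ω / phat ω) * Real.exp (-c ω) * (1 - ptil ω)) * (Y ω * A ω)
        - (S ω * (ptil ω / phat ω) * Real.exp (-c ω) * (1 - ptil ω) * μhat1 ω) * A ω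
        + ((-(S ω * ptil ω * (1 - ptil ω) / (1 - phat ω))) * (Y ω * (1 - A ω))
          - (-(S ω * ptil ω * (1 - ptil ω) / (1 - phat ω)) * μhat0 ω) * (1 - A ω))
        + S ω * ptil ω * (1 - ptil ω) * (μhat1 ω * Real.exp (-c ω) - μhat0 ω)) ∂P
        = (∫ ω, ((S ω * (ptil ω / phat ω) * Real.exp (-c ω) * (1 - ptil ω)) * (Y ω * A ω)
        - (S ω * (ptil ω / phat ω) * Real.exp (-c ω) * (1 - ptil ω) * μhat1 ω) * A ω
        + ((-(S ω * ptil ω * (1 - ptil ω) / (1 - phat ω))) * (Y ω * (1 - A ω))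
          - (-(S ω * ptil ω * (1 - ptil ω) / (1 - phat ω)) * μhat0 ω) * (1 - A ω))) ∂P)
          + ∫ ω, S ω * ptil ω * (1 - ptil ω) * (μhat1 ω * Real.exp (-c ω) - μhat0 ω) ∂P :=
      integral_add ((i1.sub i2).add (i3.sub i4)) i5
    have A2 : ∫ ω, ((S ω * (ptil ω / phat ω) * Real.exp (-c ω) * (1 - ptil ω)) * (Y ω * A ω)
        - (S ω * (ptil ω / phat ω) * Real.exp (-c ω) * (1 - ptil ω) * μhat1 ω) * A ω
        + ((-(S ω * ptil ω * (1 - ptil ω) / (1 - phat ω))) * (Y ω * (1 - A ω))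
          - (-(S ω * ptil ω * (1 - ptil ω) / (1 - phat ω)) * μhat0 ω) * (1 - A ω))) ∂P
        = (∫ ω, ((S ω * (ptil ω / phat ω) * Real.exp (-c ω) * (1 - ptil ω)) * (Y ω * A ω)
        - (S ω * (ptil ω / phat ω) * Real.exp (-c ω) * (1 - ptil ω) * μhat1 ω) * A ω) ∂P)
          + ∫ ω, ((-(S ω * ptil ω * (1 - ptil ω) / (1 - phat ω))) * (Y ω * (1 - A ω))
          - (-(S ω * ptil ω * (1 - ptil ω) / (1 - phat ω)) * μhat0 ω) * (1 - A ω)) ∂P :=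
      integral_add (i1.sub i2) (i3.sub i4)
    have A3 := integral_sub i1 i2
    have A4 := integral_sub i3 i4
    rw [A1, A2, A3, A4]
  rw [hstep1, hsplit, e1, e2, e3, e4]
  have q5 : ∫ ω, S ω * ptil ω * (1 - ptil ω) * (μhat1 ω * Real.exp (-c ω) - μhat0 ω) ∂P
      = (∫ ω, S ω * ptil ω * (1 - ptil ω) * (μhat1 ω * Real.exp (-c ω)) ∂P)
        - ∫ ω, S ω * ptil ω * (1 - ptil ω) * μhat0 ω ∂P := by
    rw [← integral_sub i2' i4']
    exact integral_congr_ae (Filter.Eventually.of_forall fun ω => by ring)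
  rcases hcorrect with hphc | ⟨hm1e, hm0e⟩
  · -- the randomization probability is correct
    have q6 : (∫ ω, S ω * ptil ω * (1 - ptil ω) * (Real.exp (-c ω) * μ1 ω) ∂P)
        - (∫ ω, S ω * ptil ω * (1 - ptil ω) * μ0 ω ∂P) = 0 := by
      rw [← integral_sub ih0e1 ih0μ0]
      calc ∫ ω, (S ω * ptil ω * (1 - ptil ω) * (Real.exp (-c ω) * μ1 ω)
            - S ω * ptil ω * (1 - ptil ω) * μ0 ω) ∂P
          = ∫ ω, (S ω * ptil ω * (1 - ptil ω)) * (Real.exp (-c ω) * μ1 ω - μ0 ω) ∂P :=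
            integral_congr_ae (Filter.Eventually.of_forall fun ω => by ring)
        _ = 0 := hg0
    have q1 : ∫ ω, (S ω * (ptil ω / phat ω) * Real.exp (-c ω) * (1 - ptil ω))
          * (μ1 ω * (P[A|m𝓗]) ω) ∂P
        = ∫ ω, S ω * ptil ω * (1 - ptil ω) * (Real.exp (-c ω) * μ1 ω) ∂P := by
      refine integral_congr_ae ?_
      filter_upwards [hphc, hp] with ω h hq
      have hq0 : (P[A|m𝓗]) ω ≠ 0 := ne_of_gt (lt_of_lt_of_le hε0 hq.1)
      rw [h]
      field_simp
      try ring
    have q2 : ∫ ω, (S ω * (ptil ω / phat ω) * Real.exp (-c ω) * (1 - ptil ω) * μhat1 ω)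
          * (P[A|m𝓗]) ω ∂P
        = ∫ ω, S ω * ptil ω * (1 - ptil ω) * (μhat1 ω * Real.exp (-c ω)) ∂P := by
      refine integral_congr_ae ?_
      filter_upwards [hphc, hp] with ω h hq
      have hq0 : (P[A|m𝓗]) ω ≠ 0 := ne_of_gt (lt_of_lt_of_le hε0 hq.1)
      rw [h]
      field_simp
      try ring
    have q3 : ∫ ω, (-(S ω * ptil ω * (1 - ptil ω) / (1 - phat ω)))
          * (μ0 ω * (1 - (P[A|m𝓗]) ω)) ∂P
        = ∫ ω, -(S ω * ptil ω * (1 - ptil ω) * μ0 ω) ∂P := by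
      refine integral_congr_ae ?_
      filter_upwards [hphc, hp] with ω h hq
      have hq1 : (1:ℝ) - (P[A|m𝓗]) ω ≠ 0 := ne_of_gt (by linarith [hq.2, hε0])
      rw [h]
      field_simp
      try ring
    have q4 : ∫ ω, (-(S ω * ptil ω * (1 - ptil ω) / (1 - phat ω)) * μhat0 ω)
          * (1 - (P[A|m𝓗]) ω) ∂P
        = ∫ ω, -(S ω * ptil ω * (1 - ptil ω) * μhat0 ω) ∂P := by
      refine integral_congr_ae ?_
      filter_upwards [hphc, hp] with ω h hq
      have hq1 : (1:ℝ) - (P[A|m𝓗]) ω ≠ 0 := ne_of_gt (by linarith [hq.2, hε0])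
      rw [h]
      field_simp
      try ring
    rw [q1, q2, q3, q4, q5, integral_neg, integral_neg]
    linarith [q6]
  · -- the outcome models are correct
    have r1 : ∫ ω, (S ω * (ptil ω / phat ω) * Real.exp (-c ω) * (1 - ptil ω))
          * (μ1 ω * (P[A|m𝓗]) ω) ∂P
        = ∫ ω, (S ω * (ptil ω / phat ω) * Real.exp (-c ω) * (1 - ptil ω) * μhat1 ω)
          * (P[A|m𝓗]) ω ∂P := by
      refine integral_congr_ae ?_
      filter_upwards [hm1e] with ω h
      rw [h]; ring
    have r3 : ∫ ω, (-(S ω * ptil ω * (1 - ptil ω) / (1 - phat ω)))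
          * (μ0 ω * (1 - (P[A|m𝓗]) ω)) ∂P
        = ∫ ω, (-(S ω * ptil ω * (1 - ptil ω) / (1 - phat ω)) * μhat0 ω)
          * (1 - (P[A|m𝓗]) ω) ∂P := by
      refine integral_congr_ae ?_
      filter_upwards [hm0e] with ω h
      rw [h]; ring
    have r5 : ∫ ω, S ω * ptil ω * (1 - ptil ω) * (μhat1 ω * Real.exp (-c ω) - μhat0 ω) ∂P
        = 0 := by
      calc ∫ ω, S ω * ptil ω * (1 - ptil ω) * (μhat1 ω * Real.exp (-c ω) - μhat0 ω) ∂P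
          = ∫ ω, (S ω * ptil ω * (1 - ptil ω)) * (Real.exp (-c ω) * μ1 ω - μ0 ω) ∂P := by
            refine integral_congr_ae ?_
            filter_upwards [hm1e, hm0e] with ω h1 h2
            rw [h1, h2]; ring
        _ = 0 := hg0
    rw [r1, r3, r5]
    ring
end

section
/- Assume the sequential mean-independence conditions: for every j = 1,...,k, P[Z_j·B_j | 𝓖_j] = q_j·P[Z_j | 𝓖_j] almost surely. Then P[ζ·∏_{j=1}^{k} (1−B_j)/(1−q_j) | 𝓖_1] = P[ζ | 𝓖_1] almost surely. (This is the sequential inverse-probability-weighting identity underlying the identification of the causal excursion effect over a window of Δ > 1 decision points.) -/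
/-!
Write `q = P[B | 𝓖]`. Pulling the `𝓖`-measurable factor `(1 - q)⁻¹` out of
the conditional expectation and using mean independence `P[Z B | 𝓖] = q P[Z | 𝓖]` gives
`P[Z (1 - B) / (1 - q) | 𝓖] = P[Z | 𝓖]`: one inverse-probability weight is removed. Applying this at
`𝓖_{j+1}` to `Z_{j+1}` turns `Z_j` into `Z_{j+1}`, and the tower property transports each such step
down to `𝓖_1`; with `Z_0 = ζ ∏_{j=1}^k (1 - B_j) / (1 - q_j)` this gives
`P[Z_0 | 𝓖_1] = P[Z_k | 𝓖_1] = P[ζ | 𝓖_1]`. The weights are bounded by `ε⁻¹`,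
which makes every quantity integrable.
-/

open MeasureTheory Filter Finset

section

variable {Ω : Type*} {m mΩ : MeasurableSpace Ω} {μ : Measure Ω}

theorem condExp_mul_one_sub_div_one_sub_condExp {Z B : Ω → ℝ} (hZ : Integrable Z μ)
    (hZB : Integrable (fun ω => Z ω * B ω) μ)
    (hW : Integrable (fun ω => Z ω * ((1 - B ω) / (1 - μ[B | m] ω))) μ)
    (hq : ∀ᵐ ω ∂μ, μ[B | m] ω ≠ 1)
    (hMI : μ[fun ω => Z ω * B ω | m] =ᵐ[μ] fun ω => μ[B | m] ω * μ[Z | m] ω) :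
    μ[fun ω => Z ω * ((1 - B ω) / (1 - μ[B | m] ω)) | m] =ᵐ[μ] μ[Z | m] := by
  set q := μ[B | m]
  have hW_eq : (fun ω => Z ω * ((1 - B ω) / (1 - q ω)))
      = (fun ω => (1 - q ω)⁻¹) * fun ω => Z ω * (1 - B ω) := by
    funext ω; simp only [Pi.mul_apply]; ring
  have hZ_sub_ZB : (fun ω => Z ω * (1 - B ω)) = Z - fun ω => Z ω * B ω := by
    funext ω; simp only [Pi.sub_apply]; ring
  have hinv_meas : StronglyMeasurable[m] fun ω => (1 - q ω)⁻¹ :=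
    (measurable_const.sub stronglyMeasurable_condExp.measurable).inv.stronglyMeasurable
  have hZ1B : μ[fun ω => Z ω * (1 - B ω) | m] =ᵐ[μ] fun ω => (1 - q ω) * μ[Z | m] ω := by
    rw [hZ_sub_ZB]
    filter_upwards [condExp_sub hZ hZB m, hMI] with ω hsub hMIω
    rw [hsub, Pi.sub_apply, hMIω]
    ring
  rw [hW_eq] at hW ⊢
  filter_upwards [condExp_mul_of_stronglyMeasurable_left hinv_meas hW (hZ_sub_ZB ▸ hZ.sub hZB),
    hZ1B, hq] with ω hpull hZ1Bω hqω
  rw [hpull, Pi.mul_apply, hZ1Bω, inv_mul_cancel_left₀ (sub_ne_zero.2 hqω.symm)]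

theorem condExp_eq_of_forall_condExp_succ_eq [IsFiniteMeasure μ] {𝓖 : ℕ → MeasurableSpace Ω}
    {F : ℕ → Ω → ℝ} {k : ℕ} (hm𝓖 : ∀ j < k, m ≤ 𝓖 (j + 1)) (h𝓖 : ∀ j < k, 𝓖 (j + 1) ≤ mΩ)
    (hstep : ∀ j < k, μ[F j | 𝓖 (j + 1)] =ᵐ[μ] μ[F (j + 1) | 𝓖 (j + 1)]) :
    μ[F 0 | m] =ᵐ[μ] μ[F k | m] := by
  induction k with
  | zero => rfl
  | succ k ih =>
    have htower (f : Ω → ℝ) : μ[μ[f | 𝓖 (k + 1)] | m] =ᵐ[μ] μ[f | m] :=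
      condExp_condExp_of_le (hm𝓖 k k.lt_succ_self) (h𝓖 k k.lt_succ_self)
    calc μ[F 0 | m]
        =ᵐ[μ] μ[F k | m] := ih (fun j hj => hm𝓖 j (hj.trans k.lt_succ_self))
          (fun j hj => h𝓖 j (hj.trans k.lt_succ_self))
          (fun j hj => hstep j (hj.trans k.lt_succ_self))
      _ =ᵐ[μ] μ[μ[F k | 𝓖 (k + 1)] | m] := (htower _).symm
      _ =ᵐ[μ] μ[μ[F (k + 1) | 𝓖 (k + 1)] | m] := condExp_congr_ae (hstep k k.lt_succ_self)
      _ =ᵐ[μ] μ[F (k + 1) | m] := htower _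

theorem abs_one_sub_div_one_sub_le_inv {b q ε : ℝ} (hε : 0 < ε) (hb : b = 0 ∨ b = 1)
    (hq : q ≤ 1 - ε) : |(1 - b) / (1 - q)| ≤ ε⁻¹ := by
  have hεq : ε ≤ 1 - q := by linarith
  have hnum : |1 - b| ≤ 1 := by rcases hb with rfl | rfl <;> norm_num
  rw [abs_div, abs_of_pos (hε.trans_le hεq), ← one_div]
  exact div_le_div₀ zero_le_one hnum hε hεq

noncomputable def ipwWeight (μ : Measure Ω) (𝓖 : ℕ → MeasurableSpace Ω) (B : ℕ → Ω → ℝ)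
    (s : Finset ℕ) (ω : Ω) : ℝ :=
  ∏ l ∈ s, (1 - B l ω) / (1 - μ[B l | 𝓖 l] ω)

variable {𝓖 : ℕ → MeasurableSpace Ω} {B : ℕ → Ω → ℝ} {s : Finset ℕ}

theorem ipwWeight_Icc_of_le {j k : ℕ} (hjk : j ≤ k) (ω : Ω) :
    ipwWeight μ 𝓖 B (Icc j k) ω
      = (1 - B j ω) / (1 - μ[B j | 𝓖 j] ω) * ipwWeight μ 𝓖 B (Icc (j + 1) k) ω := by
  rw [ipwWeight, ← insert_Icc_add_one_left_eq_Icc hjk, prod_insert (by simp)]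
  rfl

theorem measurable_ipwWeight (hB : ∀ l ∈ s, Measurable (B l)) (h𝓖 : ∀ l ∈ s, 𝓖 l ≤ mΩ) :
    Measurable (ipwWeight μ 𝓖 B s) :=
  Finset.measurable_prod _ fun l hl => (measurable_const.sub (hB l hl)).div
    (measurable_const.sub (stronglyMeasurable_condExp.mono (h𝓖 l hl)).measurable)

theorem ae_abs_ipwWeight_le {ε : ℝ} (hε : 0 < ε) (hB01 : ∀ l ∈ s, ∀ᵐ ω ∂μ, B l ω = 0 ∨ B l ω = 1)
    (hq : ∀ l ∈ s, ∀ᵐ ω ∂μ, μ[B l | 𝓖 l] ω ≤ 1 - ε) :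
    ∀ᵐ ω ∂μ, |ipwWeight μ 𝓖 B s ω| ≤ ε⁻¹ ^ #s := by
  filter_upwards [(eventually_all_finset s).2 hB01, (eventually_all_finset s).2 hq]
    with ω hBω hqω
  rw [ipwWeight, abs_prod, ← prod_const]
  exact prod_le_prod (fun _ _ => abs_nonneg _)
    fun l hl => abs_one_sub_div_one_sub_le_inv hε (hBω l hl) (hqω l hl)

theorem integrable_mul_ipwWeight {ζ : Ω → ℝ} {ε : ℝ} (hζ : Integrable ζ μ) (hε : 0 < ε)
    (hB : ∀ l ∈ s, Measurable (B l)) (hB01 : ∀ l ∈ s, ∀ᵐ ω ∂μ, B l ω = 0 ∨ B l ω = 1)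
    (h𝓖 : ∀ l ∈ s, 𝓖 l ≤ mΩ) (hq : ∀ l ∈ s, ∀ᵐ ω ∂μ, μ[B l | 𝓖 l] ω ≤ 1 - ε) :
    Integrable (fun ω => ζ ω * ipwWeight μ 𝓖 B s ω) μ :=
  hζ.mul_bdd (measurable_ipwWeight hB h𝓖).aestronglyMeasurable
    (ae_abs_ipwWeight_le hε hB01 hq)

end

/-- Sequential inverse-probability-weighting identity. With `q_j = P[B_j|𝓖_j]`
and `Z_j = ζ·∏_{l=j+1}^{k} (1−B_l)/(1−q_l)`, if `P[Z_j·B_j | 𝓖_j] = q_j·P[Z_j | 𝓖_j]` a.s.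
for each `j = 1,...,k`, then `P[ζ·∏_{j=1}^{k} (1−B_j)/(1−q_j) | 𝓖_1] = P[ζ | 𝓖_1]` a.s. -/
theorem sequential_ipw_identity
    {Ω : Type*} {mΩ : MeasurableSpace Ω} {P : Measure Ω} [IsProbabilityMeasure P]
    {k : ℕ} {𝓖 : ℕ → MeasurableSpace Ω}
    (h𝓖mono : ∀ i j, 1 ≤ i → i ≤ j → j ≤ k → 𝓖 i ≤ 𝓖 j)
    (h𝓖le : ∀ j, 1 ≤ j → j ≤ k → 𝓖 j ≤ mΩ)
    {B : ℕ → Ω → ℝ} (hB : ∀ j, Measurable (B j))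
    (hB01 : ∀ j, 1 ≤ j → j ≤ k → ∀ᵐ ω ∂P, B j ω = 0 ∨ B j ω = 1)
    {ε : ℝ} (hε : 0 < ε)
    (hq : ∀ j, 1 ≤ j → j ≤ k → ∀ᵐ ω ∂P, (P[B j | 𝓖 j]) ω ≤ 1 - ε)
    {ζ : Ω → ℝ} (hζmeas : Measurable ζ) {Cζ : ℝ} (hζb : ∀ᵐ ω ∂P, |ζ ω| ≤ Cζ)
    (hMI : ∀ j, 1 ≤ j → j ≤ k →
      P[(fun ω => (ζ ω * ∏ l ∈ Finset.Icc (j + 1) k,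
            (1 - B l ω) / (1 - (P[B l | 𝓖 l]) ω)) * B j ω) | 𝓖 j]
        =ᵐ[P] fun ω => (P[B j | 𝓖 j]) ω *
          (P[(fun ω => ζ ω * ∏ l ∈ Finset.Icc (j + 1) k,
            (1 - B l ω) / (1 - (P[B l | 𝓖 l]) ω)) | 𝓖 j]) ω) :
    P[(fun ω => ζ ω * ∏ j ∈ Finset.Icc 1 k,
        (1 - B j ω) / (1 - (P[B j | 𝓖 j]) ω)) | 𝓖 1]
      =ᵐ[P] P[ζ | 𝓖 1] := by
  set F : ℕ → Ω → ℝ := fun j ω => ζ ω * ipwWeight P 𝓖 B (Icc (j + 1) k) ω with hF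
  have hζ : Integrable ζ P :=
    (integrable_const Cζ).mono' hζmeas.aestronglyMeasurable (by simpa only [Real.norm_eq_abs])
  have hF_int (j : ℕ) : Integrable (F j) P := by
    refine integrable_mul_ipwWeight hζ hε (fun l _ => hB l) ?_ ?_ ?_ <;> intro l hl <;>
      obtain ⟨hl1, hlk⟩ := mem_Icc.1 hl
    exacts [hB01 l (by omega) hlk, h𝓖le l (by omega) hlk, hq l (by omega) hlk]
  have hstep : ∀ j < k, P[F j | 𝓖 (j + 1)] =ᵐ[P] P[F (j + 1) | 𝓖 (j + 1)] := by
    intro j hj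
    have hF_succ : F j = fun ω => F (j + 1) ω
        * ((1 - B (j + 1) ω) / (1 - P[B (j + 1) | 𝓖 (j + 1)] ω)) := by
      funext ω
      simp only [hF, ipwWeight_Icc_of_le (Nat.succ_le_of_lt hj)]
      ring
    have hB_le : ∀ᵐ ω ∂P, ‖B (j + 1) ω‖ ≤ 1 := by
      filter_upwards [hB01 (j + 1) (by omega) hj] with ω hω
      rcases hω with h | h <;> simp [h]
    rw [hF_succ]
    refine condExp_mul_one_sub_div_one_sub_condExp (hF_int _)
      ((hF_int _).mul_bdd (hB _).aestronglyMeasurable hB_le) (hF_succ ▸ hF_int j) ?_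
      (hMI (j + 1) (by omega) hj)
    filter_upwards [hq (j + 1) (by omega) hj] with ω hω
    linarith
  have hF_last : F k = ζ := by
    funext ω
    simp [hF, ipwWeight]
  have htelescope := condExp_eq_of_forall_condExp_succ_eq
    (fun j hj => h𝓖mono 1 (j + 1) le_rfl (by omega) hj) (fun j hj => h𝓖le (j + 1) (by omega) hj)
    hstep
  rwa [hF_last] at htelescope
end
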